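/- arXiv:math/0305284 — 9 statements merged into one kernel-verified Lean document; each statement's English description precedes it below -/
import Mathlib

section
/- Let k be an algebraically closed field of characteristic p ≥ 3, let A be a finite subgroup of the additive group of k of order p^m (m ≥ 1), and let F = k(t,u) be a hyperelliptic function field with u² = ∏_{j=1}^{s} (∏_{a ∈ A} (t + a) − a_j), where s ∈ ℕ and the a_j ∈ k are pairwise distinct. Then for every b ∈ A there exists a field automorphism ψ_b of F fixing k with ψ_b(t) = t + b and ψ_b(u) = u. -/
open Polynomial

/-- Let `k` be algebraically closed of characteristic `p ≥ 3`, `A` a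
finite subgroup of `(k,+)` of order `p^m` (`m ≥ 1`), and `F = k(t,u)` a hyperelliptic
function field with `u² = ∏_j (∏_{a ∈ A} (t + a) - a_j)`, the `a_j ∈ k` pairwise
distinct. Then for every `b ∈ A` there is a `k`-automorphism `ψ_b : t ↦ t + b, u ↦ u`. -/
theorem stmt6 (k F : Type*) [Field k] [Field F] [Algebra k F] [IsAlgClosed k]
    (p : ℕ) (hp : p.Prime) (hp3 : 3 ≤ p) [CharP k p]
    (m : ℕ) (hm : 1 ≤ m)
    (A : AddSubgroup k) (hA : (A : Set k).Finite) (hcard : Nat.card A = p ^ m)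
    (s : ℕ) (a : Fin s → k) (ha : Function.Injective a)
    (t u : F) (htr : Transcendental k t)
    (hFtu : IntermediateField.adjoin k {t, u} = ⊤)
    (hu : u ^ 2 = ∏ j, ((∏ b ∈ hA.toFinset, (t + algebraMap k F b)) -
      algebraMap k F (a j)))
    (hsep : (∏ j, ((∏ b ∈ hA.toFinset, (X + C b)) - C (a j)) : Polynomial k).Separable)
    (hgenus : ∃ g : ℕ, 1 < g ∧
      ((∏ j, ((∏ b ∈ hA.toFinset, (X + C b)) - C (a j)) : Polynomial k).natDegree
          = 2 * g + 1 ∨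
       (∏ j, ((∏ b ∈ hA.toFinset, (X + C b)) - C (a j)) : Polynomial k).natDegree
          = 2 * g + 2)) :
    ∀ b ∈ A, ∃ ψ : F ≃ₐ[k] F, ψ t = t + algebraMap k F b ∧ ψ u = u := by
  classical
  intro b hb
  set π : Polynomial k := ∏ c ∈ hA.toFinset, (X + C c) with hπdef
  set D : Polynomial k := ∏ j, (π - C (a j)) with hDdef
  -- Step 1 : substitution invariance of π and D
  have hπb : aeval (X + C b : Polynomial k) π = π := by
    rw [hπdef, map_prod]
    refine Finset.prod_bij' (fun c _ => b + c) (fun c _ => -b + c) ?_ ?_ ?_ ?_ ?_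
    · intro c hc
      rw [hA.mem_toFinset] at hc ⊢
      exact A.add_mem hb hc
    · intro c hc
      rw [hA.mem_toFinset] at hc ⊢
      exact A.add_mem (A.neg_mem hb) hc
    · intro c _; ring
    · intro c _; ring
    · intro c _
      rw [map_add, aeval_X, aeval_C, Polynomial.algebraMap_eq, add_assoc, ← C_add]
  have hDb : aeval (X + C b : Polynomial k) D = D := by
    rw [hDdef, map_prod]
    refine Finset.prod_congr rfl fun j _ => ?_
    rw [map_sub, hπb, aeval_C, Polynomial.algebraMap_eq]
  have hDdeg : 0 < D.natDegree := by
    obtain ⟨g, hg1, hg2 | hg2⟩ := hgenus <;> omega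
  have hsf : Squarefree D := by
    exact hsep.squarefree
  -- Step 2 : the rational function field L
  set L := RatFunc k with hLdef
  set dL : L := algebraMap (Polynomial k) L D with hdLdef
  have hnsq : ∀ v : L, v ^ 2 ≠ dL := by
    intro v hv
    have hvint : IsIntegral (Polynomial k) v :=
      ⟨X ^ 2 - C D, monic_X_pow_sub_C D two_ne_zero, by
        simp [eval₂_sub, hv, hdLdef]⟩
    obtain ⟨w, hw⟩ := IsIntegrallyClosed.isIntegral_iff.mp hvint
    have hw2 : w ^ 2 = D := by
      apply IsFractionRing.injective (Polynomial k) L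
      rw [map_pow, hw, hv, hdLdef]
    have hwu : IsUnit w := hsf w (by rw [← hw2]; exact ⟨1, by ring⟩)
    have := natDegree_eq_zero_of_isUnit hwu
    have : D.natDegree = 0 := by
      rw [← hw2, natDegree_pow, this, mul_zero]
    omega
  set q : Polynomial L := X ^ 2 - C dL with hqdef
  have hq_irr : Irreducible q := X_pow_sub_C_irreducible_of_prime Nat.prime_two hnsq
  haveI : Fact (Irreducible q) := ⟨hq_irr⟩
  -- Step 3 : the embedding Λ : L →ₐ[k] F
  have hinj : Function.Injective (aeval t : Polynomial k →ₐ[k] F) :=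
    transcendental_iff_injective.mp htr
  have hcond : nonZeroDivisors (Polynomial k) ≤
      Submonoid.comap (aeval t : Polynomial k →ₐ[k] F) (nonZeroDivisors F) := by
    intro f hf
    rw [Submonoid.mem_comap, mem_nonZeroDivisors_iff_ne_zero]
    intro h0
    exact nonZeroDivisors.ne_zero hf (hinj (by simpa using h0))
  set Λ : L →ₐ[k] F := RatFunc.liftAlgHom (aeval t) hcond with hΛdef
  have hΛp : ∀ f : Polynomial k, Λ (algebraMap (Polynomial k) L f) = aeval t f := by
    intro f
    have := RatFunc.liftAlgHom_apply_div (aeval t) hcond f 1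
    simpa using this
  letI : Algebra L F := Λ.toRingHom.toAlgebra
  have hALF : algebraMap L F = Λ.toRingHom := rfl
  haveI : IsScalarTower k L F := IsScalarTower.of_algebraMap_eq' (Λ.comp_algebraMap).symm
  -- Step 4 : F ≃ AdjoinRoot q
  have htD : aeval t D = u ^ 2 := by
    rw [hu, hDdef, map_prod]
    refine Finset.prod_congr rfl fun j _ => ?_
    rw [map_sub, aeval_C, hπdef, map_prod]
    refine congrArg₂ _ (Finset.prod_congr rfl fun c _ => ?_) rfl
    rw [map_add, aeval_X, aeval_C]
  have hroot : (aeval u) q = 0 := by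
    rw [hqdef, map_sub, map_pow, aeval_X, aeval_C]
    show u ^ 2 - algebraMap L F dL = 0
    rw [hALF, hdLdef]
    show u ^ 2 - Λ (algebraMap (Polynomial k) L D) = 0
    rw [hΛp, htD, sub_self]
  set φ : AdjoinRoot q →ₐ[L] F := AdjoinRoot.liftAlgHom q (Algebra.ofId L F) u hroot with hφdef
  set φk : AdjoinRoot q →ₐ[k] F := φ.restrictScalars k with hφkdef
  have hφof : ∀ x : L, φk (AdjoinRoot.of q x) = Λ x := by
    intro x
    show φ (AdjoinRoot.of q x) = Λ x
    rw [← AdjoinRoot.algebraMap_eq, φ.commutes, hALF]; rfl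
  have hφt : φk (AdjoinRoot.of q (algebraMap (Polynomial k) L X)) = t := by
    rw [hφof, hΛp, aeval_X]
  have hφu : φk (AdjoinRoot.root q) = u := by
    show φ (AdjoinRoot.root q) = u
    exact AdjoinRoot.liftAlgHom_root _ _ _ _
  have hφsurj : Function.Surjective φk := by
    intro x
    have hx : x ∈ φk.fieldRange := by
      have hle : IntermediateField.adjoin k {t, u} ≤ φk.fieldRange := by
        rw [IntermediateField.adjoin_le_iff]
        rintro y (rfl | rfl)
        · exact ⟨_, hφt⟩
        · exact ⟨_, hφu⟩
      rw [hFtu] at hle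
      exact hle trivial
    exact AlgHom.mem_fieldRange.mp hx
  have hφinj : Function.Injective φk := φk.toRingHom.injective
  set φke : AdjoinRoot q ≃ₐ[k] F := AlgEquiv.ofBijective φk ⟨hφinj, hφsurj⟩ with hφkedef
  have hφke_apply : ∀ x, φke x = φk x := fun x => rfl
  -- Step 5 : the automorphism σ of L
  set g0 : Polynomial k →ₐ[k] L :=
    (IsScalarTower.toAlgHom k (Polynomial k) L).comp
      ((algEquivAevalXAddC b : Polynomial k ≃ₐ[k] Polynomial k) : Polynomial k →ₐ[k] Polynomial k)
      with hg0def
  have hg0_apply : ∀ f : Polynomial k, g0 f = algebraMap (Polynomial k) L (aeval (X + C b) f) := by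
    intro f; rfl
  have hg0inj : Function.Injective g0 := by
    refine (IsFractionRing.injective (Polynomial k) L).comp ?_
    exact (algEquivAevalXAddC b).injective
  have hg0cond : nonZeroDivisors (Polynomial k) ≤
      Submonoid.comap g0 (nonZeroDivisors L) := by
    intro f hf
    rw [Submonoid.mem_comap, mem_nonZeroDivisors_iff_ne_zero]
    intro h0
    exact nonZeroDivisors.ne_zero hf (hg0inj (by simpa using h0))
  set σ : L →ₐ[k] L := RatFunc.liftAlgHom g0 hg0cond with hσdef
  have hσp : ∀ f : Polynomial k, σ (algebraMap (Polynomial k) L f)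
      = algebraMap (Polynomial k) L (aeval (X + C b) f) := by
    intro f
    have := RatFunc.liftAlgHom_apply_div g0 hg0cond f 1
    simpa [hg0_apply] using this
  have hσD : σ dL = dL := by rw [hdLdef, hσp, hDb]
  -- Step 6 : the lifted endomorphism of AdjoinRoot q
  have heval2 : ∀ {S : Type u_1} [inst : CommRing S] (f : L →+* S) (x : S),
      eval₂ f x q = x ^ 2 - f dL := by
    intro S _ f x
    rw [hqdef]
    simp [eval₂_sub, eval₂_pow]
  have hlift0 : eval₂ ((AdjoinRoot.of q).comp σ.toRingHom) (AdjoinRoot.root q) q = 0 := by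
    rw [heval2, RingHom.comp_apply]
    show AdjoinRoot.root q ^ 2 - AdjoinRoot.of q (σ dL) = 0
    rw [hσD]
    have h0 := AdjoinRoot.eval₂_root q
    rw [heval2] at h0
    exact h0
  set lift' : AdjoinRoot q →+* AdjoinRoot q :=
    AdjoinRoot.lift ((AdjoinRoot.of q).comp σ.toRingHom) (AdjoinRoot.root q) hlift0 with hliftdef
  have hlift_of : ∀ x : L, lift' (AdjoinRoot.of q x) = AdjoinRoot.of q (σ x) := by
    intro x; rw [hliftdef, AdjoinRoot.lift_of]; rfl
  have hlift_root : lift' (AdjoinRoot.root q) = AdjoinRoot.root q := by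
    rw [hliftdef, AdjoinRoot.lift_root]
  -- Step 7 : assemble Ψ : F →ₐ[k] F
  set Ψ0 : F →+* F := (φk.toRingHom.comp lift').comp (φke.symm : F ≃+* AdjoinRoot q).toRingHom
    with hΨ0def
  have hΨ0_apply : ∀ x, Ψ0 x = φk (lift' (φke.symm x)) := fun x => rfl
  have hkalg : ∀ c : k, Ψ0 (algebraMap k F c) = algebraMap k F c := by
    intro c
    rw [hΨ0_apply]
    have h1 : φke.symm (algebraMap k F c) = algebraMap k (AdjoinRoot q) c :=
      (AlgEquiv.symm φke).commutes c
    rw [h1, IsScalarTower.algebraMap_apply k L (AdjoinRoot q), AdjoinRoot.algebraMap_eq,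
      hlift_of, σ.commutes, hφof]
    exact Λ.commutes c
  set Ψ : F →ₐ[k] F := { toRingHom := Ψ0, commutes' := hkalg } with hΨdef
  have hΨ_apply : ∀ x, Ψ x = φk (lift' (φke.symm x)) := fun x => rfl
  have hΨt : Ψ t = t + algebraMap k F b := by
    have h1 : φke.symm t = AdjoinRoot.of q (algebraMap (Polynomial k) L X) := by
      rw [AlgEquiv.symm_apply_eq, hφke_apply, hφt]
    rw [hΨ_apply, h1, hlift_of, hσp, hφof, hΛp]
    simp
  have hΨu : Ψ u = u := by
    have h1 : φke.symm u = AdjoinRoot.root q := by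
      rw [AlgEquiv.symm_apply_eq, hφke_apply, hφu]
    rw [hΨ_apply, h1, hlift_root, hφu]
  have hΨsurj : Function.Surjective Ψ := by
    intro x
    have hx : x ∈ Ψ.fieldRange := by
      have hle : IntermediateField.adjoin k {t, u} ≤ Ψ.fieldRange := by
        rw [IntermediateField.adjoin_le_iff]
        have ht' : t ∈ Ψ.fieldRange := AlgHom.mem_fieldRange.mpr ⟨t - algebraMap k F b, by
          rw [map_sub, hΨt, Ψ.commutes]; ring⟩
        have hu' : u ∈ Ψ.fieldRange := AlgHom.mem_fieldRange.mpr ⟨u, hΨu⟩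
        rintro y (rfl | rfl)
        exacts [ht', hu']
      rw [hFtu] at hle
      exact hle trivial
    exact AlgHom.mem_fieldRange.mp hx
  exact ⟨AlgEquiv.ofBijective Ψ ⟨Ψ.toRingHom.injective, hΨsurj⟩, hΨt, hΨu⟩
end

section
/- Let k be an algebraically closed field of characteristic p ≥ 3, let n ≥ 1 with gcd(n,p) = 1, and let F = k(t,u) be a hyperelliptic function field with u² = t^{ν₀}·(tⁿ − 1)^{ν₁}·(tⁿ + 1)^{ν₂}·∏_{j=1}^{s} (t^{2n} − a_j tⁿ + 1), where ν₀, ν₁, ν₂ ∈ {0,1}, s ∈ ℕ, the a_j ∈ k∖{2, −2} are pairwise distinct, and ν₁ = ν₂ whenever n = 2 or n is odd. Let i ∈ k satisfy i² = −1, and let m ∈ ℕ satisfy 2m = 2ν₀ + n(ν₁ + ν₂) + 2ns. Then there exists a field automorphism σ of F fixing k with σ(t) = 1/t and σ(u) = i^{ν₁}·u/t^m. -/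
open Polynomial


/-- Extensionality for `k`-algebra endomorphisms of a field generated by two elements. -/
theorem auxExt {k F : Type*} [Field k] [Field F] [Algebra k F] (t u : F)
    (hFtu : IntermediateField.adjoin k {t, u} = ⊤) (φ₁ φ₂ : F →ₐ[k] F)
    (h1 : φ₁ t = φ₂ t) (h2 : φ₁ u = φ₂ u) : φ₁ = φ₂ := by
  let E : IntermediateField k F :=
    { AlgHom.equalizer φ₁ φ₂ with
      inv_mem' := fun x hx => by
        have hx' : φ₁ x = φ₂ x := hx
        show φ₁ x⁻¹ = φ₂ x⁻¹
        rw [map_inv₀, map_inv₀, hx'] }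
  have hle : IntermediateField.adjoin k {t, u} ≤ E := by
    rw [IntermediateField.adjoin_le_iff]
    rintro x (rfl | rfl)
    · exact h1
    · exact h2
  rw [hFtu] at hle
  exact AlgHom.ext fun x => hle (IntermediateField.mem_top (x := x))

/-- Lift through a power basis along a ring hom on the base. -/
theorem auxLift {R S F : Type*} [Field R] [Field S] [Field F] [Algebra R S]
    (pb : PowerBasis R S) (f : R →+* F) (y : F)
    (hy : Polynomial.eval₂ f y (minpoly R pb.gen) = 0) :
    ∃ φ : S →+* F, (∀ r, φ (algebraMap R S r) = f r) ∧ φ pb.gen = y := by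
  letI : Algebra R F := f.toAlgebra
  have hy' : Polynomial.aeval y (minpoly R pb.gen) = 0 := hy
  exact ⟨(pb.lift y hy').toRingHom, fun r => (pb.lift y hy').commutes r, pb.lift_gen y hy'⟩


set_option maxHeartbeats 1000000 in
set_option synthInstance.maxHeartbeats 400000 in
/-- Given a squarefree polynomial `D` of positive degree, transcendental elements `t, t'`
of `F` and square roots `u, u'` of `D(t)`, `D(t')`, with `F = k(t,u)`, there is a
`k`-algebra endomorphism of `F` sending `t ↦ t'` and `u ↦ u'`. -/
theorem auxHom {k F : Type*} [Field k] [Field F] [Algebra k F]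
    (D : Polynomial k) (hsqf : Squarefree D) (hdeg : 0 < D.natDegree)
    (t u t' u' : F) (ht : Transcendental k t) (ht' : Transcendental k t')
    (hFtu : IntermediateField.adjoin k {t, u} = ⊤)
    (hu : u ^ 2 = Polynomial.aeval t D) (hu' : u' ^ 2 = Polynomial.aeval t' D) :
    ∃ φ : F →ₐ[k] F, φ t = t' ∧ φ u = u' := by
  classical
  have hinj : Function.Injective (aeval t : k[X] →ₐ[k] F) :=
    transcendental_iff_injective.mp ht
  have hinj' : Function.Injective (aeval t' : k[X] →ₐ[k] F) :=
    transcendental_iff_injective.mp ht'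
  set ψ : RatFunc k →ₐ[k] F := RatFunc.liftAlgHom (aeval t)
    (nonZeroDivisors_le_comap_nonZeroDivisors_of_injective _ hinj) with hψdef
  set ψ' : RatFunc k →ₐ[k] F := RatFunc.liftAlgHom (aeval t')
    (nonZeroDivisors_le_comap_nonZeroDivisors_of_injective _ hinj') with hψ'def
  have hψp : ∀ p : k[X], ψ (algebraMap k[X] (RatFunc k) p) = aeval t p := by
    intro p
    have := RatFunc.liftAlgHom_apply_div (φ := (aeval t : k[X] →ₐ[k] F))
      (hφ := nonZeroDivisors_le_comap_nonZeroDivisors_of_injective _ hinj) p 1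
    simpa using this
  have hψ'p : ∀ p : k[X], ψ' (algebraMap k[X] (RatFunc k) p) = aeval t' p := by
    intro p
    have := RatFunc.liftAlgHom_apply_div (φ := (aeval t' : k[X] →ₐ[k] F))
      (hφ := nonZeroDivisors_le_comap_nonZeroDivisors_of_injective _ hinj') p 1
    simpa using this
  have hψinj : Function.Injective ψ := ψ.toRingHom.injective
  letI : Algebra (RatFunc k) F := ψ.toRingHom.toAlgebra
  have halg : ∀ q : RatFunc k, algebraMap (RatFunc k) F q = ψ q := fun _ => rfl
  set d : RatFunc k := algebraMap k[X] (RatFunc k) D with hddef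
  have hd : algebraMap (RatFunc k) F d = u ^ 2 := by rw [halg, hψp, hu]
  have htX : algebraMap (RatFunc k) F (algebraMap k[X] (RatFunc k) X) = t := by
    rw [halg, hψp, aeval_X]
  -- no rational function squares to d
  have hno : ∀ r : RatFunc k, r ^ 2 ≠ d := by
    intro r hr
    have hrint : IsIntegral k[X] r := by
      refine ⟨Polynomial.X ^ 2 - Polynomial.C D, monic_X_pow_sub_C D two_ne_zero, ?_⟩
      simp only [eval₂_sub, eval₂_pow, eval₂_X, eval₂_C]
      rw [hr, hddef, sub_self]
    obtain ⟨p, hp⟩ := IsIntegrallyClosed.isIntegral_iff.mp hrint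
    have hp2 : p ^ 2 = D := by
      apply IsFractionRing.injective k[X] (RatFunc k)
      rw [map_pow, hp, hr, hddef]
    have hup : IsUnit p := hsqf p (by rw [← pow_two, hp2])
    have : D.natDegree = 0 := by
      rw [← hp2, natDegree_pow, natDegree_eq_zero_of_isUnit hup, mul_zero]
    omega
  -- u is integral over RatFunc k with minpoly X² - C d
  have hroot : Polynomial.aeval u (Polynomial.X ^ 2 - Polynomial.C d) = 0 := by
    simp only [map_sub, map_pow, aeval_X, aeval_C]
    rw [hd, sub_self]
  have hmonic : (Polynomial.X ^ 2 - Polynomial.C d).Monic := monic_X_pow_sub_C d two_ne_zero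
  have hint : IsIntegral (RatFunc k) u := ⟨Polynomial.X ^ 2 - Polynomial.C d, hmonic, hroot⟩
  have hmin : minpoly (RatFunc k) u = Polynomial.X ^ 2 - Polynomial.C d := by
    have hdvd := minpoly.dvd (RatFunc k) u hroot
    have hXne : (Polynomial.X ^ 2 - Polynomial.C d : (RatFunc k)[X]) ≠ 0 := hmonic.ne_zero
    have hdegX : (Polynomial.X ^ 2 - Polynomial.C d : (RatFunc k)[X]).natDegree = 2 :=
      natDegree_X_pow_sub_C
    have hle : (minpoly (RatFunc k) u).natDegree ≤ 2 := by
      have := Polynomial.natDegree_le_of_dvd hdvd hXne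
      omega
    have hpos := minpoly.natDegree_pos hint
    have hne1 : (minpoly (RatFunc k) u).natDegree ≠ 1 := by
      intro h1
      have hdeg1 : (minpoly (RatFunc k) u).degree = 1 := by
        rw [Polynomial.degree_eq_natDegree (minpoly.ne_zero hint), h1, Nat.cast_one]
      obtain ⟨r, hr⟩ := (minpoly.degree_eq_one_iff).mp hdeg1
      apply hno r
      apply hψinj
      rw [map_pow, ← halg, hr, hu, ← halg, hd]
      exact hu ▸ rfl
    have h2 : (minpoly (RatFunc k) u).natDegree = 2 := by omega
    obtain ⟨q, hq⟩ := hdvd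
    have hqne : q ≠ 0 := by
      intro h; rw [h, mul_zero] at hq; exact hXne hq
    have hmne : minpoly (RatFunc k) u ≠ 0 := minpoly.ne_zero hint
    have hqdeg : q.natDegree = 0 := by
      have := Polynomial.natDegree_mul hmne hqne
      rw [← hq, hdegX, h2] at this
      omega
    have hq0 : q = Polynomial.C (q.coeff 0) := Polynomial.eq_C_of_natDegree_eq_zero hqdeg
    have hlc : q.coeff 0 = 1 := by
      have := congrArg Polynomial.leadingCoeff hq
      rw [hmonic.leadingCoeff, Polynomial.leadingCoeff_mul,
        (minpoly.monic hint).leadingCoeff, one_mul] at this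
      rw [Polynomial.leadingCoeff, hqdeg] at this
      exact this.symm
    rw [hq, hq0, hlc, map_one, mul_one]
  -- F = (RatFunc k)(u)
  have htop : IntermediateField.adjoin (RatFunc k) {u} = ⊤ := by
    rw [eq_top_iff]
    intro x _
    have hsub : (IntermediateField.adjoin k {t, u} : Set F) ⊆
        (IntermediateField.adjoin (RatFunc k) {u} : Set F) := by
      rw [IntermediateField.adjoin_subset_adjoin_iff]
      constructor
      · rintro _ ⟨c, rfl⟩
        have : algebraMap k F c = algebraMap (RatFunc k) F (algebraMap k (RatFunc k) c) := by
          rw [halg, ψ.commutes]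
        rw [this]
        exact IntermediateField.algebraMap_mem _ _
      · rintro x (rfl | rfl)
        · rw [← htX]
          exact IntermediateField.algebraMap_mem _ _
        · exact IntermediateField.subset_adjoin _ _ rfl
    have : x ∈ (IntermediateField.adjoin k {t, u} : Set F) := by
      rw [hFtu]; trivial
    exact hsub this
  -- power basis
  let eF : (IntermediateField.adjoin (RatFunc k) {u}) ≃ₐ[RatFunc k] F :=
    (IntermediateField.equivOfEq htop).trans IntermediateField.topEquiv
  let pb : PowerBasis (RatFunc k) F := (IntermediateField.adjoin.powerBasis hint).map eF
  have hgen : pb.gen = u := by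
    simp only [pb, PowerBasis.map_gen, IntermediateField.adjoin.powerBasis_gen]
    rfl
  have hy : Polynomial.eval₂ (ψ'.toRingHom : RatFunc k →+* F) u' (minpoly (RatFunc k) pb.gen)
      = 0 := by
    rw [hgen, hmin]
    simp only [eval₂_sub, eval₂_pow, eval₂_X, eval₂_C]
    show u' ^ 2 - ψ' d = 0
    rw [hψ'p D, ← hu', sub_self]
  obtain ⟨φ₀, hφ₀c, hφ₀g⟩ := auxLift pb ψ'.toRingHom u' hy
  have hcomm : ∀ c : k, φ₀ (algebraMap k F c) = algebraMap k F c := by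
    intro c
    have h1 : algebraMap k F c = algebraMap (RatFunc k) F (algebraMap k (RatFunc k) c) := by
      rw [halg, ψ.commutes]
    conv_lhs => rw [h1]
    rw [hφ₀c]
    exact ψ'.commutes c
  refine ⟨{ toRingHom := φ₀, commutes' := hcomm }, ?_, ?_⟩
  · show φ₀ t = t'
    rw [← htX, hφ₀c]
    have := hψ'p X
    rw [aeval_X] at this
    exact this
  · show φ₀ u = u'
    rw [← hgen]
    exact hφ₀g

/-- Let `k` be algebraically closed of characteristic `p ≥ 3`,
`gcd(n,p) = 1`, `n ≥ 1`, and `F = k(t,u)` a hyperelliptic function field in dihedral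
normal form `u² = t^ν₀ (tⁿ-1)^ν₁ (tⁿ+1)^ν₂ ∏_j (t^{2n} - a_j tⁿ + 1)`. If `i² = -1`
and `2m = 2ν₀ + n(ν₁+ν₂) + 2ns`, then there is a `k`-automorphism
`σ : t ↦ 1/t, u ↦ i^{ν₁} u / t^m`. -/
theorem stmt8 (k F : Type*) [Field k] [Field F] [Algebra k F] [IsAlgClosed k]
    (p : ℕ) (hp : p.Prime) (hp3 : 3 ≤ p) [CharP k p]
    (n : ℕ) (hn : 1 ≤ n) (hnp : Nat.Coprime n p)
    (ν₀ ν₁ ν₂ s : ℕ) (hν₀ : ν₀ ≤ 1) (hν₁ : ν₁ ≤ 1) (hν₂ : ν₂ ≤ 1)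
    (a : Fin s → k) (ha : Function.Injective a) (ha2 : ∀ j, a j ≠ 2 ∧ a j ≠ -2)
    (hνeq : (n = 2 ∨ Odd n) → ν₁ = ν₂)
    (t u : F) (htr : Transcendental k t)
    (hFtu : IntermediateField.adjoin k {t, u} = ⊤)
    (hu : u ^ 2 = t ^ ν₀ * (t ^ n - 1) ^ ν₁ * (t ^ n + 1) ^ ν₂ *
      ∏ j, (t ^ (2 * n) - algebraMap k F (a j) * t ^ n + 1))
    (hsep : (X ^ ν₀ * (X ^ n - 1) ^ ν₁ * (X ^ n + 1) ^ ν₂ *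
      ∏ j, (X ^ (2 * n) - C (a j) * X ^ n + 1) : Polynomial k).Separable)
    (hgenus : ∃ g : ℕ, 1 < g ∧
      ((X ^ ν₀ * (X ^ n - 1) ^ ν₁ * (X ^ n + 1) ^ ν₂ *
          ∏ j, (X ^ (2 * n) - C (a j) * X ^ n + 1) : Polynomial k).natDegree
            = 2 * g + 1 ∨
       (X ^ ν₀ * (X ^ n - 1) ^ ν₁ * (X ^ n + 1) ^ ν₂ *
          ∏ j, (X ^ (2 * n) - C (a j) * X ^ n + 1) : Polynomial k).natDegree
            = 2 * g + 2))
    (i : k) (hi : i ^ 2 = -1)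
    (m : ℕ) (hmeq : 2 * m = 2 * ν₀ + n * (ν₁ + ν₂) + 2 * n * s) :
    ∃ σ : F ≃ₐ[k] F, σ t = t⁻¹ ∧ σ u = algebraMap k F i ^ ν₁ * u / t ^ m := by
  classical
  set Dp : Polynomial k := X ^ ν₀ * (X ^ n - 1) ^ ν₁ * (X ^ n + 1) ^ ν₂ *
      ∏ j, (X ^ (2 * n) - C (a j) * X ^ n + 1) with hDp
  have hsqf : Squarefree Dp := hsep.squarefree
  have hdeg : 0 < Dp.natDegree := by
    obtain ⟨g, hg, h | h⟩ := hgenus <;> omega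
  have ht0 : t ≠ 0 := by
    rintro rfl
    exact htr isAlgebraic_zero
  have htinv : Transcendental k t⁻¹ := fun h => htr (by simpa using h.inv)
  have htn0 : t ^ n ≠ 0 := pow_ne_zero _ ht0
  have hm0 : t ^ m ≠ 0 := pow_ne_zero _ ht0
  have ht2m : t ^ (2 * m) ≠ 0 := pow_ne_zero _ ht0
  have hexp : ∀ x : F, aeval x Dp = x ^ ν₀ * (x ^ n - 1) ^ ν₁ * (x ^ n + 1) ^ ν₂ *
      ∏ j, (x ^ (2 * n) - algebraMap k F (a j) * x ^ n + 1) := by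
    intro x
    simp only [hDp, map_mul, map_pow, map_sub, map_add, map_one, aeval_X, aeval_C, map_prod]
  have hu2 : u ^ 2 = aeval t Dp := by rw [hexp t]; exact hu
  set iF : F := algebraMap k F i with hiFdef
  have hiF2 : iF ^ 2 = -1 := by rw [hiFdef, ← map_pow, hi, map_neg, map_one]
  set u' : F := iF ^ ν₁ * u / t ^ m with hu'def
  -- the key algebraic identity
  have hA : t⁻¹ ^ ν₀ * t ^ (2 * ν₀) = t ^ ν₀ := by
    rw [pow_mul, ← mul_pow]
    congr 1
    rw [pow_two, ← mul_assoc, inv_mul_cancel₀ ht0, one_mul]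
  have hB : (t⁻¹ ^ n - 1) ^ ν₁ * t ^ (n * ν₁) = (-1) ^ ν₁ * (t ^ n - 1) ^ ν₁ := by
    rw [pow_mul, ← mul_pow, ← mul_pow]
    congr 1
    rw [inv_pow, sub_mul, inv_mul_cancel₀ htn0]
    ring
  have hC : (t⁻¹ ^ n + 1) ^ ν₂ * t ^ (n * ν₂) = (t ^ n + 1) ^ ν₂ := by
    rw [pow_mul, ← mul_pow]
    congr 1
    rw [inv_pow, add_mul, inv_mul_cancel₀ htn0]
    ring
  have hP : (∏ j, (t⁻¹ ^ (2 * n) - algebraMap k F (a j) * t⁻¹ ^ n + 1)) * t ^ (2 * n * s)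
      = ∏ j, (t ^ (2 * n) - algebraMap k F (a j) * t ^ n + 1) := by
    have h1 : t ^ (2 * n * s) = ∏ _j : Fin s, t ^ (2 * n) := by
      rw [Finset.prod_const, Finset.card_univ, Fintype.card_fin, ← pow_mul]
    rw [h1, ← Finset.prod_mul_distrib]
    refine Finset.prod_congr rfl fun j _ => ?_
    rw [show 2 * n = n * 2 from mul_comm 2 n]
    simp only [pow_mul, inv_pow]
    field_simp
    ring
  have E1 : aeval t⁻¹ Dp * t ^ (2 * m) = (-1) ^ ν₁ * aeval t Dp := by
    have hsum : 2 * m = 2 * ν₀ + (n * ν₁ + (n * ν₂ + 2 * n * s)) := by rw [hmeq]; ring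
    calc aeval t⁻¹ Dp * t ^ (2 * m)
        = (t⁻¹ ^ ν₀ * t ^ (2 * ν₀)) * ((t⁻¹ ^ n - 1) ^ ν₁ * t ^ (n * ν₁)) *
          ((t⁻¹ ^ n + 1) ^ ν₂ * t ^ (n * ν₂)) *
          ((∏ j, (t⁻¹ ^ (2 * n) - algebraMap k F (a j) * t⁻¹ ^ n + 1)) * t ^ (2 * n * s)) := by
          rw [hexp t⁻¹, hsum, pow_add, pow_add, pow_add]; ring
      _ = t ^ ν₀ * ((-1) ^ ν₁ * (t ^ n - 1) ^ ν₁) * (t ^ n + 1) ^ ν₂ *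
          ∏ j, (t ^ (2 * n) - algebraMap k F (a j) * t ^ n + 1) := by rw [hA, hB, hC, hP]
      _ = (-1) ^ ν₁ * aeval t Dp := by rw [hexp t]; ring
  have hu'2 : u' ^ 2 = aeval t⁻¹ Dp := by
    apply mul_right_cancel₀ ht2m
    rw [E1, ← hu2, ← hiF2, hu'def]
    field_simp
    ring
  obtain ⟨φ, hφt, hφu⟩ := auxHom Dp hsqf hdeg t u t⁻¹ u' htr htinv hFtu hu2 hu'2
  have hinvt : φ t⁻¹ = t := by rw [map_inv₀, hφt, inv_inv]
  have hφiF : φ iF = iF := φ.commutes i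
  have hφu' : φ u' = (-1) ^ ν₁ * u := by
    rw [hu'def, map_div₀, map_mul, map_pow, map_pow, hφiF, hφt, hφu, hu'def, ← hiF2]
    field_simp
    ring_nf
    rw [mul_assoc _ (t ^ m), ← mul_pow, mul_inv_cancel₀ ht0, one_pow, mul_one]
  have hφφt : φ (φ t) = t := by rw [hφt, hinvt]
  have hφφu : φ (φ u) = (-1) ^ ν₁ * u := by rw [hφu, hφu']
  have hφ4t : φ (φ (φ (φ t))) = t := by rw [hφφt, hφφt]
  have hφ4u : φ (φ (φ (φ u))) = u := by
    calc φ (φ (φ (φ u))) = φ (φ ((-1) ^ ν₁ * u)) := by rw [hφφu]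
      _ = (-1) ^ ν₁ * ((-1) ^ ν₁ * u) := by
          simp only [map_mul, map_pow, map_neg, map_one, hφφu]
      _ = u := by rw [← mul_assoc, ← mul_pow]; norm_num
  have h4 : (φ.comp φ).comp (φ.comp φ) = AlgHom.id k F := by
    apply auxExt t u hFtu
    · simpa using hφ4t
    · simpa using hφ4u
  refine ⟨AlgEquiv.ofAlgHom φ ((φ.comp φ).comp φ) ?_ ?_, ?_, ?_⟩
  · exact AlgHom.ext fun x => AlgHom.congr_fun h4 x
  · exact AlgHom.ext fun x => AlgHom.congr_fun h4 x
  · exact hφt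
  · exact hφu
end

section
/- Let k be an algebraically closed field of characteristic p ≥ 3, let m ≥ 1, r := p^m, and let F = k(t,u) be a hyperelliptic function field with u² = (t^r − t)^{ν₀} · ((t^r − t)^{r−1} + 1)^{ν₁} · ∏_{j=1}^{s} ( ((t^r − t)^{r−1} + 1)^{r+1} − a_j (t^r − t)^{r²−r} ), where ν₀, ν₁ ∈ {0,1}, s ∈ ℕ, and the a_j ∈ k∖{0} are pairwise distinct. Then there exists a field automorphism σ of F fixing k with σ(t) = t + 1 and σ(u) = u. -/
/-!
Identify `k(t)` with `k(X)`; the shift `t ↦ t + 1` is a `k`-automorphism of it which fixes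
`t ^ r - t`, because `(t + 1) ^ r = t ^ r + 1` in characteristic `p`, and hence fixes `D(t)`.
Since `D` is squarefree and nonconstant and `k[t]` is integrally closed, `D(t)` is not a square
in `k(t)`, so `u` has minimal polynomial `X ^ 2 - D(t)` over `k(t)` and `F = k(t)(u)`. This
minimal polynomial is invariant under the shift, which therefore extends to `F` with `u ↦ u`.
-/
open Polynomial IntermediateField

theorem IsIntegrallyClosed.not_isSquare_algebraMap {R K : Type*} [CommRing R] [IsDomain R]
    [IsIntegrallyClosed R] [Field K] [Algebra R K] [IsFractionRing R K] {D : R}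
    (hD : Squarefree D) (hD1 : ¬IsUnit D) : ¬IsSquare (algebraMap R K D) := by
  rintro ⟨w, hw⟩
  have hint : IsIntegral R w :=
    ⟨X ^ 2 - C D, monic_X_pow_sub_C _ two_ne_zero, by simp [hw, sq]⟩
  obtain ⟨v, rfl⟩ := IsIntegrallyClosed.isIntegral_iff.mp hint
  have hvD : v * v = D := IsFractionRing.injective R K (by simpa using hw.symm)
  have hv : IsUnit v := hD v ⟨1, by rw [hvD, mul_one]⟩
  exact hD1 (hvD ▸ hv.mul hv)

namespace RatFunc

variable {k : Type*} [Field k]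

noncomputable def shift (c : k) : RatFunc k ≃ₐ[k] RatFunc k :=
  IsFractionRing.algEquivOfAlgEquiv (taylorEquiv c)

theorem shift_algebraMap (c : k) (q : k[X]) :
    shift c (algebraMap k[X] (RatFunc k) q) = algebraMap k[X] (RatFunc k) (taylor c q) := by
  simp [shift, ← coe_taylorEquiv]

theorem shift_X (c : k) : shift c X = X + algebraMap k (RatFunc k) c := by
  rw [← algebraMap_X, shift_algebraMap]
  simp

end RatFunc

theorem IntermediateField.exists_algEquiv_extend_of_adjoin_eq_top {k F : Type*} [Field k]
    [Field F] [Algebra k F] {K : IntermediateField k F} (τ : K ≃ₐ[k] K) {u : F}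
    (hint : IsIntegral K u) (hgen : K⟮u⟯ = ⊤)
    (hτ : (minpoly K u).map (τ : K →+* K) = minpoly K u) :
    ∃ σ : F ≃ₐ[k] F, (∀ x : K, σ x = τ x) ∧ σ u = u := by
  -- transport to `K[X]/(minpoly K u)`, where `τ` acts on coefficients and fixes the root
  let ψ : AdjoinRoot (minpoly K u) ≃ₐ[K] F :=
    (adjoinRootEquivAdjoin K hint).trans ((equivOfEq hgen).trans topEquiv)
  let ρ := AdjoinRoot.mapAlgEquiv τ (minpoly K u) (minpoly K u) (by rw [hτ])
  refine ⟨((ψ.restrictScalars k).symm.trans ρ).trans (ψ.restrictScalars k), fun x => ?_, ?_⟩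
  · have hρ : ρ (algebraMap K _ x) = algebraMap K _ (τ x) := by
      simp [ρ, AdjoinRoot.algebraMap_eq]
    show ψ (ρ (ψ.symm (algebraMap K F x))) = algebraMap K F (τ x)
    rw [← ψ.commutes, ψ.symm_apply_apply, hρ, ψ.commutes]
  · have hψ : ψ (AdjoinRoot.root _) = u := by
      simp [ψ, adjoinRootEquivAdjoin_apply_root]
    show ψ (ρ (ψ.symm u)) = u
    rw [ψ.symm_apply_eq.mpr hψ.symm]
    simpa [ρ] using hψ

theorem exists_algEquiv_apply_eq_add_of_sq_eq_aeval {k F : Type*} [Field k] [Field F]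
    [Algebra k F] {t u : F} (ht : Transcendental k t) (hF : k⟮t, u⟯ = ⊤) {D : k[X]}
    (hD : Squarefree D) (hD0 : D.natDegree ≠ 0) (hu : u ^ 2 = aeval t D) (c : k)
    (hDc : taylor c D = D) :
    ∃ σ : F ≃ₐ[k] F, σ t = t + algebraMap k F c ∧ σ u = u := by
  set e := RatFunc.algEquivOfTranscendental t ht
  let τ : k⟮t⟯ ≃ₐ[k] k⟮t⟯ := (e.symm.trans (RatFunc.shift c)).trans e
  set d : k⟮t⟯ := aeval (AdjoinSimple.gen k t) D
  have hτd : τ d = d := by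
    simp [τ, e, d, RatFunc.shift_algebraMap, hDc]
  have hd_sq : ¬IsSquare d := fun hsq => by
    apply IsIntegrallyClosed.not_isSquare_algebraMap (K := RatFunc k) hD
      (not_isUnit_of_natDegree_pos D (Nat.pos_of_ne_zero hD0))
    simpa [e, d] using hsq.map e.symm
  have hud : u ^ 2 = algebraMap k⟮t⟯ F d := by simp [d, hu]
  have hmin : minpoly k⟮t⟯ u = X ^ 2 - C d := by
    refine (minpoly.eq_of_irreducible_of_monic
      (X_pow_sub_C_irreducible_of_prime Nat.prime_two ?_) ?_ (monic_X_pow_sub_C _ two_ne_zero)).symm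
    · exact fun b hb => hd_sq ⟨b, by rw [← hb, sq]⟩
    · simp [hud]
  have hint : IsIntegral k⟮t⟯ u :=
    ⟨X ^ 2 - C d, monic_X_pow_sub_C _ two_ne_zero, by simp [hud]⟩
  have hgen : k⟮t⟯⟮u⟯ = ⊤ := by
    rw [← restrictScalars_eq_top_iff (K := k), adjoin_simple_adjoin_simple, hF]
  obtain ⟨σ, hστ, hσu⟩ := exists_algEquiv_extend_of_adjoin_eq_top τ hint hgen
    (by simp [hmin, hτd])
  refine ⟨σ, ?_, hσu⟩
  have hτt : (τ (AdjoinSimple.gen k t) : F) = t + algebraMap k F c := by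
    simp only [τ, AlgEquiv.trans_apply, e, RatFunc.algEquivOfTranscendental_symm_gen,
      RatFunc.shift_X, map_add, AlgEquiv.commutes]
    simp
  simpa [hτt] using hστ (AdjoinSimple.gen k t)

theorem stmt10_general (k F : Type*) [Field k] [Field F] [Algebra k F]
    (p : ℕ) (hp : p.Prime) [CharP k p]
    (m : ℕ) (r : ℕ) (hr : r = p ^ m)
    (ν₀ ν₁ s : ℕ)
    (a : Fin s → k)
    (t u : F) (htr : Transcendental k t)
    (hFtu : IntermediateField.adjoin k {t, u} = ⊤)
    (hu : u ^ 2 = (t ^ r - t) ^ ν₀ * ((t ^ r - t) ^ (r - 1) + 1) ^ ν₁ *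
      ∏ j, (((t ^ r - t) ^ (r - 1) + 1) ^ (r + 1) -
        algebraMap k F (a j) * (t ^ r - t) ^ (r ^ 2 - r)))
    (hsep : ((X ^ r - X) ^ ν₀ * ((X ^ r - X) ^ (r - 1) + 1) ^ ν₁ *
      ∏ j, (((X ^ r - X) ^ (r - 1) + 1) ^ (r + 1) -
        C (a j) * (X ^ r - X) ^ (r ^ 2 - r)) : Polynomial k).Separable)
    (hgenus : ∃ g : ℕ, 1 < g ∧
      (((X ^ r - X) ^ ν₀ * ((X ^ r - X) ^ (r - 1) + 1) ^ ν₁ *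
          ∏ j, (((X ^ r - X) ^ (r - 1) + 1) ^ (r + 1) -
            C (a j) * (X ^ r - X) ^ (r ^ 2 - r)) : Polynomial k).natDegree = 2 * g + 1 ∨
       ((X ^ r - X) ^ ν₀ * ((X ^ r - X) ^ (r - 1) + 1) ^ ν₁ *
          ∏ j, (((X ^ r - X) ^ (r - 1) + 1) ^ (r + 1) -
            C (a j) * (X ^ r - X) ^ (r ^ 2 - r)) : Polynomial k).natDegree = 2 * g + 2)) :
    ∃ σ : F ≃ₐ[k] F, σ t = t + 1 ∧ σ u = u := by
  have := Fact.mk hp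
  set D : k[X] := (X ^ r - X) ^ ν₀ * ((X ^ r - X) ^ (r - 1) + 1) ^ ν₁ *
      ∏ j, (((X ^ r - X) ^ (r - 1) + 1) ^ (r + 1) - C (a j) * (X ^ r - X) ^ (r ^ 2 - r))
  have hD0 : D.natDegree ≠ 0 := by
    obtain ⟨g, -, h | h⟩ := hgenus <;> omega
  have hArtinSchreier : taylorAlgHom (1 : k) (X ^ r - X) = X ^ r - X := by
    rw [map_sub, map_pow, taylorAlgHom_apply, taylor_X, map_one, hr, add_pow_char_pow, one_pow]
    ring
  have hDc : taylor (1 : k) D = D := by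
    change taylorAlgHom (1 : k) D = D
    simp only [D, map_mul, map_prod, map_sub, map_pow, map_add, map_one, hArtinSchreier,
      ← algebraMap_eq, AlgHom.commutes]
  obtain ⟨σ, hσt, hσu⟩ := exists_algEquiv_apply_eq_add_of_sq_eq_aeval htr hFtu
    hsep.squarefree hD0 (by simpa [D] using hu) 1 hDc
  exact ⟨σ, by simpa using hσt, hσu⟩

/-- Let `k` be algebraically closed of characteristic `p ≥ 3`,
`r = p^m` (`m ≥ 1`), and `F = k(t,u)` a hyperelliptic function field in the
`PGL₂`-normal form. Then there is a `k`-automorphism `σ : t ↦ t + 1, u ↦ u`. -/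
theorem stmt10 (k F : Type*) [Field k] [Field F] [Algebra k F] [IsAlgClosed k]
    (p : ℕ) (hp : p.Prime) (hp3 : 3 ≤ p) [CharP k p]
    (m : ℕ) (hm : 1 ≤ m) (r : ℕ) (hr : r = p ^ m)
    (ν₀ ν₁ s : ℕ) (hν₀ : ν₀ ≤ 1) (hν₁ : ν₁ ≤ 1)
    (a : Fin s → k) (ha : Function.Injective a) (ha0 : ∀ j, a j ≠ 0)
    (t u : F) (htr : Transcendental k t)
    (hFtu : IntermediateField.adjoin k {t, u} = ⊤)
    (hu : u ^ 2 = (t ^ r - t) ^ ν₀ * ((t ^ r - t) ^ (r - 1) + 1) ^ ν₁ *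
      ∏ j, (((t ^ r - t) ^ (r - 1) + 1) ^ (r + 1) -
        algebraMap k F (a j) * (t ^ r - t) ^ (r ^ 2 - r)))
    (hsep : ((X ^ r - X) ^ ν₀ * ((X ^ r - X) ^ (r - 1) + 1) ^ ν₁ *
      ∏ j, (((X ^ r - X) ^ (r - 1) + 1) ^ (r + 1) -
        C (a j) * (X ^ r - X) ^ (r ^ 2 - r)) : Polynomial k).Separable)
    (hgenus : ∃ g : ℕ, 1 < g ∧
      (((X ^ r - X) ^ ν₀ * ((X ^ r - X) ^ (r - 1) + 1) ^ ν₁ *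
          ∏ j, (((X ^ r - X) ^ (r - 1) + 1) ^ (r + 1) -
            C (a j) * (X ^ r - X) ^ (r ^ 2 - r)) : Polynomial k).natDegree = 2 * g + 1 ∨
       ((X ^ r - X) ^ ν₀ * ((X ^ r - X) ^ (r - 1) + 1) ^ ν₁ *
          ∏ j, (((X ^ r - X) ^ (r - 1) + 1) ^ (r + 1) -
            C (a j) * (X ^ r - X) ^ (r ^ 2 - r)) : Polynomial k).natDegree = 2 * g + 2)) :
    ∃ σ : F ≃ₐ[k] F, σ t = t + 1 ∧ σ u = u :=
  stmt10_general k F p hp m r hr ν₀ ν₁ s a t u htr hFtu hu hsep hgenus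
end

section
/- Let k be a field of characteristic ≠ 2 and let F = k(t,u) = k(x,y) be a hyperelliptic function field, where u² = D_t(t) and y² = D_x(x) for monic separable polynomials D_t ∈ k[t] and D_x ∈ k[x]. Then there exists φ ∈ k(t)∖{0} such that y = φ·u. -/
open Polynomial IntermediateField

namespace Stmt13Aux

variable {k : Type*} [Field k]

lemma not_square_ratfunc (D : k[X]) (hsf : Squarefree D) (hdeg : D.natDegree ≠ 0)
    (r : RatFunc k) : r ^ 2 ≠ algebraMap k[X] (RatFunc k) D := by
  intro hr
  have hint : IsIntegral k[X] r := by
    refine ⟨X ^ 2 - C D, monic_X_pow_sub_C D two_ne_zero, ?_⟩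
    simp [hr]
  obtain ⟨p, hp⟩ := IsIntegrallyClosed.isIntegral_iff.mp hint
  have h2 : algebraMap k[X] (RatFunc k) (p ^ 2) = algebraMap k[X] (RatFunc k) D := by
    rw [map_pow, hp, hr]
  have hpD : p ^ 2 = D := IsFractionRing.injective k[X] (RatFunc k) h2
  have hu : IsUnit p := hsf p (by rw [← hpD]; ring_nf; exact dvd_rfl)
  have h0 : p.natDegree = 0 := natDegree_eq_zero_of_isUnit hu
  apply hdeg
  rw [← hpD, natDegree_pow, h0, mul_zero]

lemma descent_unit (D : k[X]) (hdeg : 5 ≤ D.natDegree) (gp h Δ : k[X])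
    (hg0 : gp ≠ 0) (hΔ0 : Δ ≠ 0) (hΔ4 : Δ.natDegree ≤ 4)
    (heq : Δ * gp ^ 2 = h ^ 2 * D) (hdg : gp.natDegree = 0) : False := by
  have hgu : IsUnit gp := isUnit_iff.mpr ⟨gp.coeff 0, by
    have hc := eq_C_of_natDegree_eq_zero hdg
    refine ⟨?_, hc.symm⟩
    have : gp.coeff 0 ≠ 0 := fun h0 => hg0 (by rw [hc, h0, map_zero])
    exact isUnit_iff_ne_zero.mpr this⟩
  have hDdvd : D ∣ Δ := by
    have h1 : D ∣ Δ * gp ^ 2 := heq ▸ Dvd.intro_left _ rfl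
    exact (hgu.pow 2).dvd_mul_right.mp h1
  have := natDegree_le_of_dvd hDdvd hΔ0
  omega

lemma descent (D : k[X]) (hsf : Squarefree D) (hdeg : 5 ≤ D.natDegree) :
    ∀ n (gp h Δ : k[X]), gp.natDegree ≤ n → gp ≠ 0 → h ≠ 0 → Δ ≠ 0 → Δ.natDegree ≤ 4 →
      Δ * gp ^ 2 = h ^ 2 * D → False := by
  intro n
  induction n with
  | zero =>
    intro gp h Δ hdg hg0 hh0 hΔ0 hΔ4 heq
    exact descent_unit D hdeg gp h Δ hg0 hΔ0 hΔ4 heq (Nat.le_zero.mp hdg)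
  | succ n ih =>
    intro gp h Δ hdg hg0 hh0 hΔ0 hΔ4 heq
    by_cases hdeg0 : gp.natDegree = 0
    · exact descent_unit D hdeg gp h Δ hg0 hΔ0 hΔ4 heq hdeg0
    · obtain ⟨π, hπirr, hπdvd⟩ := WfDvdMonoid.exists_irreducible_factor
        (fun hu => hdeg0 (natDegree_eq_zero_of_isUnit hu)) hg0
      have hπprime : Prime π := hπirr.prime
      obtain ⟨g₁, hg₁⟩ := hπdvd
      have hπ0 : π ≠ 0 := hπprime.ne_zero
      have hg₁0 : g₁ ≠ 0 := fun h0 => hg0 (by rw [hg₁, h0, mul_zero])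
      have hπdeg : 1 ≤ π.natDegree := by
        by_contra hlt
        exact hπirr.not_isUnit (isUnit_iff.mpr ⟨π.coeff 0,
          isUnit_iff_ne_zero.mpr (fun h0 => hπ0 (by
            rw [eq_C_of_natDegree_eq_zero (by omega : π.natDegree = 0), h0, map_zero])),
          (eq_C_of_natDegree_eq_zero (by omega : π.natDegree = 0)).symm⟩)
      have hmuldeg : gp.natDegree = π.natDegree + g₁.natDegree := by
        rw [hg₁, natDegree_mul hπ0 hg₁0]
      by_cases hπh : π ∣ h
      · obtain ⟨h₁, hh₁⟩ := hπh
        have hh₁0 : h₁ ≠ 0 := fun h0 => hh0 (by rw [hh₁, h0, mul_zero])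
        have heq' : π ^ 2 * (Δ * g₁ ^ 2) = π ^ 2 * (h₁ ^ 2 * D) := by
          rw [hg₁, hh₁] at heq; ring_nf at heq ⊢; linear_combination heq
        have := mul_left_cancel₀ (pow_ne_zero 2 hπ0) heq'
        exact ih g₁ h₁ Δ (by omega) hg₁0 hh₁0 hΔ0 hΔ4 this
      · have hπD : π ∣ D := by
          have h1 : π ∣ h ^ 2 * D := by
            rw [← heq, hg₁]; exact ⟨Δ * π * g₁ ^ 2, by ring⟩
          rcases hπprime.dvd_mul.mp h1 with h2 | h2
          · exact absurd (hπprime.dvd_of_dvd_pow h2) hπh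
          · exact h2
        have hπ2 : π ^ 2 ∣ h ^ 2 * D := by
          rw [← heq, hg₁]
          exact ⟨Δ * g₁ ^ 2, by ring⟩
        have hcop : IsCoprime π h := (hπirr.isCoprime_or_dvd h).resolve_right hπh
        have hπ2D : π ^ 2 ∣ D := (hcop.pow).dvd_of_dvd_mul_left hπ2
        exact hπprime.not_unit (hsf π (by rw [← sq]; exact hπ2D))

end Stmt13Aux

namespace Stmt13Aux2

variable {k : Type*} [Field k]

/-- The swap of the two variables of a bivariate polynomial, as a ring hom. -/
noncomputable def swapp : Polynomial (Polynomial k) →+* Polynomial (Polynomial k) :=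
  eval₂RingHom (eval₂RingHom (C.comp C) X) (C X)

lemma swapp_CC (c : k) : swapp (C (C c)) = C (C c) := by
  simp [swapp, coe_eval₂RingHom]

lemma swapp_CX : swapp (C (X : Polynomial k)) = X := by
  simp [swapp, coe_eval₂RingHom]

lemma swapp_X : swapp (X : Polynomial (Polynomial k)) = C X := by
  simp [swapp, coe_eval₂RingHom]

lemma swapp_swapp_apply (p : Polynomial (Polynomial k)) : swapp (swapp p) = p := by
  have h : (swapp.comp (swapp : Polynomial (Polynomial k) →+* _)) = RingHom.id _ := by
    refine ringHom_ext (fun a => ?_) ?_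
    · refine RingHom.congr_fun (f := (swapp.comp swapp).comp C) (g := (RingHom.id _).comp C)
        (ringHom_ext (fun c => ?_) ?_) a
      · simp [RingHom.comp_apply, swapp_CC]
      · simp [RingHom.comp_apply, swapp_CX, swapp_X]
    · simp [RingHom.comp_apply, swapp_CX, swapp_X]
  exact RingHom.congr_fun h p

/-- swap as a ring equivalence. -/
noncomputable def swappEquiv : Polynomial (Polynomial k) ≃+* Polynomial (Polynomial k) :=
  RingEquiv.ofRingHom (swapp : Polynomial (Polynomial k) →+* _) swapp
    (RingHom.ext swapp_swapp_apply) (RingHom.ext swapp_swapp_apply)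

lemma coeff_swapp (p : Polynomial (Polynomial k)) (i j : ℕ) :
    ((swapp p).coeff i).coeff j = (p.coeff j).coeff i := by
  induction p using Polynomial.induction_on' with
  | add f g hf hg => simp [map_add, hf, hg]
  | monomial n a =>
    induction a using Polynomial.induction_on' with
    | add f g hf hg =>
      have : (monomial n (f + g) : Polynomial (Polynomial k))
          = monomial n f + monomial n g := by rw [map_add]
      simp [this, map_add, hf, hg]
    | monomial m c =>
      have h1 : (monomial n (monomial m c) : Polynomial (Polynomial k))
          = C (C c) * (C X) ^ m * X ^ n := by
        rw [← C_mul_X_pow_eq_monomial, ← C_mul_X_pow_eq_monomial, C_mul, C_pow]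
      rw [h1]
      have h2 : swapp (C (C c) * (C X) ^ m * X ^ n)
          = C (C c) * (C X) ^ n * X ^ m := by
        rw [map_mul, map_mul, map_pow, map_pow, swapp_CC, swapp_CX, swapp_X]
        ring
      rw [h2]
      have h3 : (C (C c) * (C X) ^ n * X ^ m : Polynomial (Polynomial k))
          = monomial m ((monomial n c : Polynomial k)) := by
        rw [← C_mul_X_pow_eq_monomial, ← C_mul_X_pow_eq_monomial, C_mul, C_pow]
      have h4 : (C (C c) * (C X) ^ m * X ^ n : Polynomial (Polynomial k))
          = monomial n ((monomial m c : Polynomial k)) := by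
        rw [← C_mul_X_pow_eq_monomial, ← C_mul_X_pow_eq_monomial, C_mul, C_pow]
      rw [h3, h4]
      simp [coeff_monomial]
      split_ifs with h h' <;> simp [coeff_monomial, *]

lemma eval₂_swapp {β : Type*} [CommRing β] (f : k →+* β) (s w : β)
    (p : Polynomial (Polynomial k)) :
    eval₂ (eval₂RingHom f s) w (swapp p) = eval₂ (eval₂RingHom f w) s p := by
  have h : ((eval₂RingHom (eval₂RingHom f s) w).comp (swapp : Polynomial (Polynomial k) →+* _))
      = eval₂RingHom (eval₂RingHom f w) s := by
    refine ringHom_ext (fun a => ?_) ?_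
    · refine RingHom.congr_fun
        (f := ((eval₂RingHom (eval₂RingHom f s) w).comp swapp).comp C)
        (g := (eval₂RingHom (eval₂RingHom f w) s).comp C)
        (ringHom_ext (fun c => ?_) ?_) a
      · simp [RingHom.comp_apply, swapp_CC, coe_eval₂RingHom]
      · simp [RingHom.comp_apply, swapp_CX, coe_eval₂RingHom]
    · simp [RingHom.comp_apply, swapp_X, coe_eval₂RingHom]
  exact RingHom.congr_fun h p

lemma exists_prime_eval_zero {α β : Type*} [CommRing α] [IsDomain α]
    [UniqueFactorizationMonoid α] [Field β] (e : α →+* β) {M : α}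
    (hM0 : M ≠ 0) (hev : e M = 0) : ∃ Q, Prime Q ∧ Q ∣ M ∧ e Q = 0 := by
  have hassoc := UniqueFactorizationMonoid.factors_prod hM0
  have hproddvd : (UniqueFactorizationMonoid.factors M).prod ∣ M := hassoc.dvd
  obtain ⟨w, hw⟩ := hassoc
  have h0 : e (UniqueFactorizationMonoid.factors M).prod * e (w : α) = 0 := by
    rw [← map_mul, hw, hev]
  have hwne : e (w : α) ≠ 0 := by
    intro h
    have : e ((w : α) * (w⁻¹ : αˣ)) = 0 := by rw [map_mul, h, zero_mul]
    simp at this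
  have hprod : e (UniqueFactorizationMonoid.factors M).prod = 0 := by
    rcases mul_eq_zero.mp h0 with h | h
    · exact h
    · exact absurd h hwne
  have hmapped : (Multiset.map (⇑e) (UniqueFactorizationMonoid.factors M)).prod = 0 := by
    rw [← map_multiset_prod]; exact hprod
  obtain ⟨q, hqmem, hq0⟩ := Multiset.mem_map.mp (Multiset.prod_eq_zero_iff.mp hmapped)
  exact ⟨q, UniqueFactorizationMonoid.prime_of_factor q hqmem,
    dvd_trans (Multiset.dvd_prod hqmem) hproddvd, hq0⟩

lemma natDegree_eq_of_assoc {K : Type*} [Field K] {p q : Polynomial K}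
    (h : Associated p q) (hq : q ≠ 0) : p.natDegree = q.natDegree := by
  have hp : p ≠ 0 := fun h0 => hq (by
    obtain ⟨u, hu⟩ := h; rw [← hu, h0, zero_mul])
  exact le_antisymm (natDegree_le_of_dvd h.dvd hq) (natDegree_le_of_dvd h.symm.dvd hp)

lemma quad_irred {K : Type*} [Field K] (p q : K)
    (hns : ∀ r : K, r ^ 2 ≠ p ^ 2 - 4 * q) :
    Irreducible (X ^ 2 + C p * X + C q) := by
  set P : Polynomial K := X ^ 2 + C p * X + C q with hP
  have hdeg : P.natDegree = 2 := by
    have h1 : P = C 1 * X ^ 2 + C p * X + C q := by simp [hP]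
    rw [h1]; exact natDegree_quadratic one_ne_zero
  have hm : P.Monic := by
    rw [Monic, leadingCoeff, hdeg]
    simp [hP, coeff_X_pow]
  by_contra hni
  obtain ⟨c₁, c₂, h0, h1⟩ := (hm.not_irreducible_iff_exists_add_mul_eq_coeff hdeg).mp hni
  have hq' : q = c₁ * c₂ := by simpa [hP, coeff_X_pow] using h0
  have hp' : p = c₁ + c₂ := by simpa [hP, coeff_X_pow] using h1
  exact hns (c₁ - c₂) (by rw [hp', hq']; ring)


lemma quad_natDegree {K : Type*} [Field K] (p q : K) :
    (X ^ 2 + C p * X + C q).natDegree = 2 := by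
  have h1 : (X ^ 2 + C p * X + C q : Polynomial K) = C 1 * X ^ 2 + C p * X + C q := by simp
  rw [h1]; exact natDegree_quadratic one_ne_zero

lemma quad_ne_zero {K : Type*} [Field K] (p q : K) : (X ^ 2 + C p * X + C q) ≠ 0 := by
  intro h
  have := quad_natDegree p q
  rw [h, natDegree_zero] at this
  omega

lemma quad_coeff_two {K : Type*} [Field K] (p q : K) :
    (X ^ 2 + C p * X + C q).coeff 2 = 1 := by
  simp [coeff_X_pow, coeff_C]

lemma quad_coeff_one {K : Type*} [Field K] (p q : K) :
    (X ^ 2 + C p * X + C q).coeff 1 = p := by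
  simp [coeff_X_pow, coeff_C]

lemma quad_coeff_zero {K : Type*} [Field K] (p q : K) :
    (X ^ 2 + C p * X + C q).coeff 0 = q := by
  simp [coeff_X_pow, coeff_C]

end Stmt13Aux2

namespace Stmt13Aux3

variable {k F : Type*} [Field k] [Field F] [Algebra k F]

/-- Embedding of the rational function field at a transcendental element. -/
noncomputable def eps (s : F) (hs : Transcendental k s) : RatFunc k →+* F :=
  IsFractionRing.lift (g := ((aeval s : k[X] →ₐ[k] F) : k[X] →+* F))
    (transcendental_iff_injective.mp hs)

lemma eps_algebraMap (s : F) (hs : Transcendental k s) (f : k[X]) :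
    eps s hs (algebraMap k[X] (RatFunc k) f) = aeval s f :=
  IsFractionRing.lift_algebraMap _ _

lemma eps_injective (s : F) (hs : Transcendental k s) : Function.Injective (eps s hs) :=
  (eps s hs).injective

lemma eps_const (s : F) (hs : Transcendental k s) (c : k) :
    eps s hs (algebraMap k (RatFunc k) c) = algebraMap k F c := by
  rw [IsScalarTower.algebraMap_apply k k[X] (RatFunc k), eps_algebraMap]
  simp

lemma eps_comp (s : F) (hs : Transcendental k s) :
    (eps s hs).comp (algebraMap k[X] (RatFunc k))
      = ((aeval s : k[X] →ₐ[k] F) : k[X] →+* F) :=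
  RingHom.ext (eps_algebraMap s hs)

lemma mem_adjoin_iff_eps (s : F) (hs : Transcendental k s) (z : F) :
    z ∈ adjoin k ({s} : Set F) ↔ ∃ r : RatFunc k, eps s hs r = z := by
  constructor
  · intro hz
    obtain ⟨f, g, hfg⟩ := (IntermediateField.mem_adjoin_simple_iff k z).mp hz
    refine ⟨algebraMap k[X] (RatFunc k) f / algebraMap k[X] (RatFunc k) g, ?_⟩
    rw [map_div₀, eps_algebraMap, eps_algebraMap, hfg]
  · rintro ⟨r, rfl⟩
    have haev : ∀ f : k[X], aeval s f ∈ adjoin k ({s} : Set F) := by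
      intro f
      have h1 : aeval s f ∈ Algebra.adjoin k ({s} : Set F) := by
        rw [Algebra.adjoin_singleton_eq_range_aeval]
        exact ⟨f, rfl⟩
      exact algebra_adjoin_le_adjoin k {s} h1
    rw [← RatFunc.num_div_denom r, map_div₀, eps_algebraMap, eps_algebraMap]
    exact div_mem (haev _) (haev _)

lemma aeval_mem_adjoin {s z : F} (hz : z ∈ adjoin k ({s} : Set F)) (f : k[X]) :
    aeval z f ∈ adjoin k ({s} : Set F) := by
  have h := IntermediateField.aeval_coe (K := k) (L := F) (S := adjoin k ({s} : Set F))
    (⟨z, hz⟩ : adjoin k ({s} : Set F)) f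
  rw [show (aeval z) f
      = ((aeval (⟨z, hz⟩ : adjoin k ({s} : Set F)) f : adjoin k ({s} : Set F)) : F) from h]
  exact (aeval (⟨z, hz⟩ : adjoin k ({s} : Set F)) f).2

lemma eps_ne (s w : F) (hs : Transcendental k s) (D : k[X]) (hw : w ^ 2 = aeval s D)
    (hns : ∀ r : RatFunc k, r ^ 2 ≠ algebraMap k[X] (RatFunc k) D) (r : RatFunc k) :
    eps s hs r ≠ w := by
  intro h
  apply hns r
  apply eps_injective s hs
  rw [map_pow, h, hw, eps_algebraMap]

lemma decomp_gen (s w : F) (hs : Transcendental k s) (D : k[X]) (hw : w ^ 2 = aeval s D)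
    (hns : ∀ r : RatFunc k, r ^ 2 ≠ algebraMap k[X] (RatFunc k) D)
    {z : F} (hz : z ∈ adjoin k ({s, w} : Set F)) :
    ∃ c e : RatFunc k, z = eps s hs c + eps s hs e * w := by
  have hwD : w ^ 2 = eps s hs (algebraMap k[X] (RatFunc k) D) := by
    rw [eps_algebraMap]; exact hw
  induction hz using IntermediateField.adjoin_induction with
  | mem z hz =>
    rcases hz with h | h
    · exact ⟨algebraMap k[X] (RatFunc k) X, 0,
        by rw [map_zero, zero_mul, add_zero, eps_algebraMap, aeval_X, h]⟩
    · refine ⟨0, 1, ?_⟩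
      simp only [Set.mem_singleton_iff] at h
      simp [h]
  | algebraMap c =>
    exact ⟨algebraMap k (RatFunc k) c, 0,
      by rw [map_zero, zero_mul, add_zero, eps_const]⟩
  | add z₁ z₂ h₁ h₂ ih₁ ih₂ =>
    obtain ⟨c₁, e₁, rfl⟩ := ih₁
    obtain ⟨c₂, e₂, rfl⟩ := ih₂
    exact ⟨c₁ + c₂, e₁ + e₂, by rw [map_add, map_add]; ring⟩
  | mul z₁ z₂ h₁ h₂ ih₁ ih₂ =>
    obtain ⟨c₁, e₁, rfl⟩ := ih₁
    obtain ⟨c₂, e₂, rfl⟩ := ih₂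
    refine ⟨c₁ * c₂ + e₁ * e₂ * algebraMap k[X] (RatFunc k) D, c₁ * e₂ + c₂ * e₁, ?_⟩
    rw [map_add, map_mul, map_mul, map_add, map_mul, map_mul, map_mul]
    linear_combination (eps s hs e₁ * eps s hs e₂) * hwD
  | inv z hzmem ih =>
    obtain ⟨c, e, rfl⟩ := ih
    by_cases hz0 : eps s hs c + eps s hs e * w = 0
    · exact ⟨0, 0, by rw [hz0, inv_zero]; simp⟩
    · set n : RatFunc k := c ^ 2 - e ^ 2 * algebraMap k[X] (RatFunc k) D with hn
      have hn0 : n ≠ 0 := by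
        intro h0
        by_cases he : e = 0
        · have hc : c ≠ 0 := by
            intro hc0
            exact hz0 (by rw [hc0, he]; simp)
          have hc2 : c ^ 2 = 0 := by
            rw [hn, he] at h0
            simpa using h0
          exact hc (pow_eq_zero_iff (two_ne_zero) |>.mp hc2)
        · apply hns (c / e)
          have h0' : c ^ 2 - e ^ 2 * algebraMap k[X] (RatFunc k) D = 0 := by
            rw [← hn]; exact h0
          have hce : c ^ 2 = e ^ 2 * algebraMap k[X] (RatFunc k) D := by
            linear_combination h0'
          rw [div_pow, hce]
          field_simp
      have hNne : eps s hs n ≠ 0 := fun h0 => hn0 (eps_injective s hs (by rw [h0, map_zero]))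
      have key : (eps s hs c + eps s hs e * w) * (eps s hs c - eps s hs e * w)
          = eps s hs n := by
        rw [hn, map_sub, map_mul, map_pow, map_pow]
        linear_combination (-(eps s hs e)^2) * hwD
      refine ⟨c / n, -(e / n), ?_⟩
      rw [map_neg, map_div₀, map_div₀]
      rw [inv_eq_of_mul_eq_one_right (b := (eps s hs c - eps s hs e * w) / eps s hs n)
        (by rw [← mul_div_assoc, key]; exact div_self hNne)]
      field_simp
      ring

lemma decomp_unique (s w : F) (hs : Transcendental k s) (D : k[X]) (hw : w ^ 2 = aeval s D)
    (hns : ∀ r : RatFunc k, r ^ 2 ≠ algebraMap k[X] (RatFunc k) D)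
    {c e c' e' : RatFunc k}
    (h : eps s hs c + eps s hs e * w = eps s hs c' + eps s hs e' * w) :
    c = c' ∧ e = e' := by
  by_cases he : e = e'
  · subst he
    refine ⟨eps_injective s hs ?_, rfl⟩
    have := add_right_cancel h
    exact this
  · exfalso
    apply eps_ne s w hs D hw hns ((c' - c) / (e - e'))
    have hee : eps s hs (e - e') ≠ 0 := by
      intro h0
      have h1 : eps s hs (e - e') = eps s hs 0 := by rw [h0, map_zero]
      exact he (sub_eq_zero.mp (eps_injective s hs h1))
    rw [map_div₀, map_sub, map_sub]
    rw [div_eq_iff (by rw [← map_sub]; exact hee)]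
    linear_combination -h

end Stmt13Aux3

open Stmt13Aux Stmt13Aux2 Stmt13Aux3 in
/-- In a hyperelliptic function field `k(t,u) = k(x,y)` (char `k ≠ 2`)
with `u² = D_t(t)` and `y² = D_x(x)`, there is `φ ∈ k(t)∖{0}` with `y = φ·u`. -/
theorem stmt13 (k F : Type*) [Field k] [Field F] [Algebra k F]
    (hchar : ringChar k ≠ 2)
    (g : ℕ) (hg : 1 < g)
    (t u x y : F) (Dt Dx : Polynomial k)
    (hDtm : Dt.Monic) (hDts : Dt.Separable)
    (hDtdeg : Dt.natDegree = 2 * g + 1 ∨ Dt.natDegree = 2 * g + 2)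
    (hDxm : Dx.Monic) (hDxs : Dx.Separable)
    (hDxdeg : Dx.natDegree = 2 * g + 1 ∨ Dx.natDegree = 2 * g + 2)
    (htr : Transcendental k t) (hxtr : Transcendental k x)
    (hu : u ^ 2 = Polynomial.aeval t Dt) (hy : y ^ 2 = Polynomial.aeval x Dx)
    (hFtu : IntermediateField.adjoin k {t, u} = ⊤)
    (hFxy : IntermediateField.adjoin k {x, y} = ⊤) :
    ∃ φ : F, φ ∈ IntermediateField.adjoin k ({t} : Set F) ∧ φ ≠ 0 ∧ y = φ * u := by
  classical
  -- characteristic facts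
  have h2k : (2 : k) ≠ 0 := by
    intro h
    have hc : CharP k (ringChar k) := ringChar.charP k
    have hdvd : ringChar k ∣ 2 := (CharP.cast_eq_zero_iff k (ringChar k) 2).mp (by exact_mod_cast h)
    rcases (Nat.prime_two.eq_one_or_self_of_dvd _ hdvd) with h1 | h2
    · exact CharP.ringChar_ne_one h1
    · exact hchar h2
  have h2kX : (2 : Polynomial k) ≠ 0 := by
    intro h
    apply h2k
    have h1 : (C : k →+* Polynomial k) 2 = (C : k →+* Polynomial k) 0 := by
      rw [map_ofNat, map_zero]; exact h
    exact C_injective h1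
  have h2R : (2 : RatFunc k) ≠ 0 := by
    intro h
    apply h2kX
    have h1 : algebraMap (Polynomial k) (RatFunc k) 2 = algebraMap (Polynomial k) (RatFunc k) 0 := by
      rw [map_ofNat, map_zero]; exact h
    exact IsFractionRing.injective (Polynomial k) (RatFunc k) h1
  -- degree and squarefreeness facts
  have hDt0 : Dt ≠ 0 := hDtm.ne_zero
  have hDx0 : Dx ≠ 0 := hDxm.ne_zero
  have hDtsf : Squarefree Dt := hDts.squarefree
  have hDxsf : Squarefree Dx := hDxs.squarefree
  have hDt5 : 5 ≤ Dt.natDegree := by omega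
  have hDtdeg0 : Dt.natDegree ≠ 0 := by omega
  have hDxdeg0 : Dx.natDegree ≠ 0 := by omega
  have hnst := not_square_ratfunc Dt hDtsf hDtdeg0
  have hnsx := not_square_ratfunc Dx hDxsf hDxdeg0
  have unotk : ∀ r : RatFunc k, eps t htr r ≠ u := eps_ne t u htr Dt hu hnst
  have ynotl : ∀ r : RatFunc k, eps x hxtr r ≠ y := eps_ne x y hxtr Dx hy hnsx
  have hu2t : u ^ 2 = eps t htr (algebraMap (Polynomial k) (RatFunc k) Dt) := by
    rw [eps_algebraMap]; exact hu
  have hy2x : y ^ 2 = eps x hxtr (algebraMap (Polynomial k) (RatFunc k) Dx) := by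
    rw [eps_algebraMap]; exact hy
  have hxtop : x ∈ IntermediateField.adjoin k ({t, u} : Set F) := by
    rw [hFtu]; exact IntermediateField.mem_top
  have hytop : y ∈ IntermediateField.adjoin k ({t, u} : Set F) := by
    rw [hFtu]; exact IntermediateField.mem_top
  have httop : t ∈ IntermediateField.adjoin k ({x, y} : Set F) := by
    rw [hFxy]; exact IntermediateField.mem_top
  obtain ⟨ah, bh, hxab⟩ := decomp_gen t u htr Dt hu hnst hxtop
  -- the aeval of Dx at x, expressed over k(t) when x ∈ k(t)
  have hcomp_k : (eps t htr).comp (algebraMap k (RatFunc k)) = algebraMap k F :=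
    RingHom.ext (eps_const t htr)
  by_cases hb0 : bh = 0
  · -- Case x ∈ k(t) : then y = e·u with e ∈ k(t)
    have hx' : x = eps t htr ah := by rw [hxab, hb0, map_zero, zero_mul, add_zero]
    obtain ⟨ch, eh, hyce⟩ := decomp_gen t u htr Dt hu hnst hytop
    set vh : RatFunc k := Polynomial.eval₂ (algebraMap k (RatFunc k)) ah Dx with hvh
    have hDxx : Polynomial.aeval x Dx = eps t htr vh := by
      have h1 := Polynomial.hom_eval₂ Dx (algebraMap k (RatFunc k)) (eps t htr) ah
      rw [hcomp_k] at h1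
      rw [hx', aeval_def, ← h1]
    have hy2' : eps t htr (ch ^ 2 + eh ^ 2 * algebraMap (Polynomial k) (RatFunc k) Dt)
        + eps t htr (2 * ch * eh) * u
        = eps t htr vh + eps t htr 0 * u := by
      rw [map_zero, zero_mul, add_zero, ← hDxx, ← hy, hyce]
      simp only [map_add, map_mul, map_pow, map_ofNat]
      linear_combination (-(eps t htr eh) ^ 2) * hu2t
    obtain ⟨-, he_eq⟩ := decomp_unique t u htr Dt hu hnst hy2'
    have hce : ch = 0 ∨ eh = 0 := by
      rcases mul_eq_zero.mp he_eq with h' | h'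
      · rcases mul_eq_zero.mp h' with h'' | h''
        · exact absurd h'' h2R
        · exact Or.inl h''
      · exact Or.inr h'
    rcases hce with hc0 | he0
    · -- y = e u
      have hyeu : y = eps t htr eh * u := by rw [hyce, hc0, map_zero, zero_add]
      have heh0 : eh ≠ 0 := by
        intro h0
        have hy0 : y = 0 := by rw [hyeu, h0, map_zero, zero_mul]
        have : Polynomial.aeval x Dx = 0 := by rw [← hy, hy0]; ring
        exact hDx0 (transcendental_iff.mp hxtr Dx this)
      refine ⟨eps t htr eh, (mem_adjoin_iff_eps t htr _).mpr ⟨eh, rfl⟩, ?_, hyeu⟩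
      intro h0
      exact heh0 (eps_injective t htr (by rw [h0, map_zero]))
    · -- y ∈ k(t): contradiction
      exfalso
      have hyK : y ∈ IntermediateField.adjoin k ({t} : Set F) :=
        (mem_adjoin_iff_eps t htr y).mpr ⟨ch, by rw [hyce, he0, map_zero, zero_mul, add_zero]⟩
      have hxK : x ∈ IntermediateField.adjoin k ({t} : Set F) :=
        (mem_adjoin_iff_eps t htr x).mpr ⟨ah, hx'.symm⟩
      have hle : IntermediateField.adjoin k ({x, y} : Set F)
          ≤ IntermediateField.adjoin k ({t} : Set F) := by
        rw [IntermediateField.adjoin_le_iff]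
        rintro z hz
        rcases hz with rfl | hz
        · exact hxK
        · simp only [Set.mem_singleton_iff] at hz
          rw [hz]; exact hyK
      have huK : u ∈ IntermediateField.adjoin k ({t} : Set F) := by
        apply hle
        rw [hFxy]; exact IntermediateField.mem_top
      obtain ⟨r, hr⟩ := (mem_adjoin_iff_eps t htr u).mp huK
      exact unotk r hr
  · -- Case x ∉ k(t): derive a contradiction
    exfalso
    obtain ⟨gh, dh, htgd⟩ := decomp_gen x y hxtr Dx hy hnsx httop
    have hbF : eps t htr bh ≠ 0 := by
      intro h0
      exact hb0 (eps_injective t htr (by rw [h0, map_zero]))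
    -- δ ≠ 0
    have hd0 : dh ≠ 0 := by
      intro h0
      have htL : t ∈ IntermediateField.adjoin k ({x} : Set F) :=
        (mem_adjoin_iff_eps x hxtr t).mpr ⟨gh, by rw [htgd, h0, map_zero, zero_mul, add_zero]⟩
      have hKL : ∀ r : RatFunc k, eps t htr r ∈ IntermediateField.adjoin k ({x} : Set F) := by
        intro r
        rw [← RatFunc.num_div_denom r, map_div₀, eps_algebraMap, eps_algebraMap]
        exact div_mem (aeval_mem_adjoin htL _) (aeval_mem_adjoin htL _)
      have huL : u ∈ IntermediateField.adjoin k ({x} : Set F) := by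
        have hueq : u = (x - eps t htr ah) * (eps t htr bh)⁻¹ := by
          rw [hxab]; field_simp; ring
        rw [hueq]
        exact mul_mem (sub_mem (IntermediateField.subset_adjoin k {x} rfl) (hKL ah))
          (inv_mem (hKL bh))
      have hle : IntermediateField.adjoin k ({t, u} : Set F)
          ≤ IntermediateField.adjoin k ({x} : Set F) := by
        rw [IntermediateField.adjoin_le_iff]
        rintro z hz
        rcases hz with rfl | hz
        · exact htL
        · simp only [Set.mem_singleton_iff] at hz
          rw [hz]; exact huL
      have hyL : y ∈ IntermediateField.adjoin k ({x} : Set F) := by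
        apply hle
        rw [hFtu]; exact IntermediateField.mem_top
      obtain ⟨r, hr⟩ := (mem_adjoin_iff_eps x hxtr y).mp hyL
      exact ynotl r hr
    -- Setup: the quadratic over k(t) satisfied by x
    set aM : Polynomial k →+* RatFunc k := algebraMap (Polynomial k) (RatFunc k) with haM
    have haMinj : Function.Injective aM := IsFractionRing.injective _ _
    set pm : RatFunc k := -(2 * ah) with hpm
    set qm : RatFunc k := ah ^ 2 - bh ^ 2 * aM Dt with hqm
    have hm_irr : Irreducible (X ^ 2 + C pm * X + C qm) := by
      apply quad_irred
      intro r hr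
      refine hnst (r / (2 * bh)) ?_
      have h2b : (2 * bh : RatFunc k) ≠ 0 := mul_ne_zero h2R hb0
      rw [div_pow, hr, hpm, hqm]
      field_simp
      ring
    have hm_ev : Polynomial.eval₂ (eps t htr) x (X ^ 2 + C pm * X + C qm) = 0 := by
      simp only [eval₂_add, eval₂_mul, eval₂_pow, eval₂_C, eval₂_X]
      rw [hxab, hpm, hqm]
      simp only [map_neg, map_mul, map_sub, map_pow, map_ofNat]
      linear_combination ((eps t htr bh) ^ 2) * hu2t
    -- clearing denominators
    have hden_a : aM ah.num = ah * aM ah.denom :=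
      (div_eq_iff ((map_ne_zero_iff _ haMinj).mpr (RatFunc.denom_ne_zero ah))).mp
        (RatFunc.num_div_denom ah)
    have hden_c : aM qm.num = qm * aM qm.denom :=
      (div_eq_iff ((map_ne_zero_iff _ haMinj).mpr (RatFunc.denom_ne_zero qm))).mp
        (RatFunc.num_div_denom qm)
    set ρ : Polynomial k := ah.denom * qm.denom with hρ
    have hρ0 : ρ ≠ 0 := mul_ne_zero (RatFunc.denom_ne_zero ah) (RatFunc.denom_ne_zero qm)
    set M : Polynomial (Polynomial k) :=
      Polynomial.C ρ * X ^ 2 + Polynomial.C (-(2 * (ah.num * qm.denom))) * X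
        + Polynomial.C (ah.denom * qm.num) with hM
    have hΦM : M.map aM = C (aM ρ) * (X ^ 2 + C pm * X + C qm) := by
      rw [hM]
      simp only [Polynomial.map_add, Polynomial.map_mul, Polynomial.map_pow, map_C, map_X]
      have h1 : aM (-(2 * (ah.num * qm.denom))) = aM ρ * pm := by
        rw [map_neg, map_mul, map_mul, hden_a, map_ofNat, hρ, map_mul, hpm]; ring
      have h2 : aM (ah.denom * qm.num) = aM ρ * qm := by
        rw [map_mul, hden_c, hρ, map_mul]; ring
      rw [h1, h2, C_mul, C_mul]
      ring
    have hM0 : M ≠ 0 := by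
      intro h0
      have hc2 : M.coeff 2 = ρ := by
        rw [hM]; simp [coeff_X_pow, coeff_C]
      rw [h0, coeff_zero] at hc2
      exact hρ0 hc2.symm
    set ξt : Polynomial k →+* F := eval₂RingHom (algebraMap k F) t with hξt
    set ξx : Polynomial k →+* F := eval₂RingHom (algebraMap k F) x with hξx
    have hξt_aeval : ∀ f : Polynomial k, ξt f = Polynomial.aeval t f := by
      intro f; rw [hξt, coe_eval₂RingHom, aeval_def]
    have hξx_aeval : ∀ f : Polynomial k, ξx f = Polynomial.aeval x f := by
      intro f; rw [hξx, coe_eval₂RingHom, aeval_def]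
    have hepsξt : (eps t htr).comp aM = ξt := by
      refine RingHom.ext fun f => ?_
      rw [RingHom.comp_apply, haM, eps_algebraMap, hξt_aeval]
    have hepsξx : (eps x hxtr).comp aM = ξx := by
      refine RingHom.ext fun f => ?_
      rw [RingHom.comp_apply, haM, eps_algebraMap, hξx_aeval]
    set ev : Polynomial (Polynomial k) →+* F := eval₂RingHom ξt x with hev
    have hevM : ev M = 0 := by
      have h1 : ev M = Polynomial.eval₂ (eps t htr) x (M.map aM) := by
        rw [Polynomial.eval₂_map, hepsξt, hev, coe_eval₂RingHom]
      rw [h1, hΦM, eval₂_mul, eval₂_C, hm_ev, mul_zero]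
    obtain ⟨Q, hQprime, hQdvdM, hevQ⟩ := exists_prime_eval_zero ev hM0 hevM
    have hQ0 : Q ≠ 0 := hQprime.ne_zero
    have hQdvdmap : Q.map aM ∣ M.map aM := by
      obtain ⟨c, hc⟩ := hQdvdM
      exact ⟨c.map aM, by rw [hc, Polynomial.map_mul]⟩
    have hevQ_eval : Polynomial.eval₂ ξt x Q = 0 := by
      rw [← hevQ, hev, coe_eval₂RingHom]
    have hΦQnotunit : ¬IsUnit (Q.map aM) := by
      intro hun
      have hdeg0 : Q.natDegree = 0 := by
        rw [← natDegree_map_eq_of_injective haMinj Q]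
        exact natDegree_eq_zero_of_isUnit hun
      have hQC : Q = Polynomial.C (Q.coeff 0) := eq_C_of_natDegree_eq_zero hdeg0
      have h1 : ξt (Q.coeff 0) = 0 := by
        rw [hQC, eval₂_C] at hevQ_eval; exact hevQ_eval
      have h2 : Q.coeff 0 = 0 := transcendental_iff.mp htr _ (by
        rw [← hξt_aeval]; exact h1)
      exact hQ0 (by rw [hQC, h2, map_zero])
    have hCunit : IsUnit (C (aM ρ) : Polynomial (RatFunc k)) :=
      isUnit_C.mpr (isUnit_iff_ne_zero.mpr ((map_ne_zero_iff _ haMinj).mpr hρ0))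
    have hassocCm : Associated (X ^ 2 + C pm * X + C qm : Polynomial (RatFunc k))
        (C (aM ρ) * (X ^ 2 + C pm * X + C qm)) :=
      ⟨hCunit.unit, by rw [hCunit.unit_spec]; ring⟩
    have hmirr' : Irreducible (C (aM ρ) * (X ^ 2 + C pm * X + C qm)) :=
      hassocCm.irreducible hm_irr
    obtain ⟨W, hW⟩ := hQdvdmap
    rw [hΦM] at hW
    have hWunit : IsUnit W := by
      rcases hmirr'.isUnit_or_isUnit hW with h | h
      · exact absurd h hΦQnotunit
      · exact h
    have hassocQm : Associated (Q.map aM) (X ^ 2 + C pm * X + C qm) := by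
      have h1 : Associated (Q.map aM) (C (aM ρ) * (X ^ 2 + C pm * X + C qm)) :=
        ⟨hWunit.unit, by rw [hWunit.unit_spec, ← hW]⟩
      exact h1.trans hassocCm.symm
    obtain ⟨v, hv⟩ := hassocQm
    obtain ⟨vc, hvcu, hvc⟩ := isUnit_iff.mp v.isUnit
    have hQv : Q.map aM * C vc = X ^ 2 + C pm * X + C qm := by rw [hvc]; exact hv
    have hcoeff : ∀ i, aM (Q.coeff i) * vc = (X ^ 2 + C pm * X + C qm).coeff i := by
      intro i
      have h1 := congrArg (fun P => Polynomial.coeff P i) hQv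
      simpa only [coeff_mul_C, coeff_map] using h1
    have h2c : aM (Q.coeff 2) * vc = 1 := by rw [hcoeff 2, quad_coeff_two]
    have hA0 : aM (Q.coeff 2) ≠ 0 := left_ne_zero_of_mul_eq_one h2c
    have h1c : aM (Q.coeff 1) = aM (Q.coeff 2) * pm := by
      have h := hcoeff 1
      rw [quad_coeff_one] at h
      calc aM (Q.coeff 1) = aM (Q.coeff 1) * (aM (Q.coeff 2) * vc) := by rw [h2c, mul_one]
        _ = (aM (Q.coeff 1) * vc) * aM (Q.coeff 2) := by ring
        _ = pm * aM (Q.coeff 2) := by rw [h]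
        _ = aM (Q.coeff 2) * pm := mul_comm _ _
    have h0c : aM (Q.coeff 0) = aM (Q.coeff 2) * qm := by
      have h := hcoeff 0
      rw [quad_coeff_zero] at h
      calc aM (Q.coeff 0) = aM (Q.coeff 0) * (aM (Q.coeff 2) * vc) := by rw [h2c, mul_one]
        _ = (aM (Q.coeff 0) * vc) * aM (Q.coeff 2) := by ring
        _ = qm * aM (Q.coeff 2) := by rw [h]
        _ = aM (Q.coeff 2) * qm := mul_comm _ _
    set Δ : Polynomial k := (Q.coeff 1) ^ 2 - 4 * (Q.coeff 2 * Q.coeff 0) with hΔ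
    have hden_b : aM bh.num = bh * aM bh.denom :=
      (div_eq_iff ((map_ne_zero_iff _ haMinj).mpr (RatFunc.denom_ne_zero bh))).mp
        (RatFunc.num_div_denom bh)
    have hkey : aM (Δ * bh.denom ^ 2) = aM ((2 * Q.coeff 2 * bh.num) ^ 2 * Dt) := by
      rw [hΔ]
      simp only [map_mul, map_sub, map_pow, map_ofNat]
      rw [h1c, h0c, hden_b, hpm, hqm]
      ring
    have hpoly : Δ * bh.denom ^ 2 = (2 * Q.coeff 2 * bh.num) ^ 2 * Dt := haMinj hkey
    -- the swapped polynomial and the quadratic over k(x)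
    have hQirr : Irreducible Q := hQprime.irreducible
    have hQ'irr : Irreducible (swapp Q) :=
      (MulEquiv.irreducible_iff (swappEquiv (k := k))).mpr hQirr
    have hQ'0 : swapp Q ≠ 0 := by
      intro h0
      apply hQ0
      have h1 := congrArg (swapp (k := k)) h0
      rw [swapp_swapp_apply] at h1
      simpa using h1
    have hevQ' : Polynomial.eval₂ ξx t (swapp Q) = 0 := by
      rw [hξx, eval₂_swapp (algebraMap k F) x t Q, ← hξt]
      exact hevQ_eval
    have hQ'degpos : 1 ≤ (swapp Q).natDegree := by
      by_contra hlt
      have h0 : (swapp Q).natDegree = 0 := by omega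
      have hC : swapp Q = Polynomial.C ((swapp Q).coeff 0) := eq_C_of_natDegree_eq_zero h0
      rw [hC, eval₂_C] at hevQ'
      have hx0 : (swapp Q).coeff 0 = 0 := transcendental_iff.mp hxtr _ (by
        rw [← hξx_aeval]; exact hevQ')
      exact hQ'0 (by rw [hC, hx0, map_zero])
    have hprim : (swapp Q).IsPrimitive := by
      intro r hr
      obtain ⟨W', hW'⟩ := hr
      by_contra hru
      rcases hQ'irr.isUnit_or_isUnit hW' with h | h
      · exact hru (isUnit_C.mp h)
      · have hr0 : r ≠ 0 := by
          intro h0; apply hQ'0; rw [hW', h0, map_zero, zero_mul]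
        have hW'0 : W' ≠ 0 := by
          intro h0; apply hQ'0; rw [hW', h0, mul_zero]
        have hd : (swapp Q).natDegree = 0 := by
          rw [hW', natDegree_mul (C_ne_zero.mpr hr0) hW'0, natDegree_C,
            natDegree_eq_zero_of_isUnit h]
        omega
    have hgauss : Irreducible ((swapp Q).map aM) :=
      (hprim.irreducible_iff_irreducible_map_fraction_map (K := RatFunc k)).mp hQ'irr
    set pn : RatFunc k := -(2 * gh) with hpn
    set qn : RatFunc k := gh ^ 2 - dh ^ 2 * aM Dx with hqn
    have hn_irr : Irreducible (X ^ 2 + C pn * X + C qn) := by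
      apply quad_irred
      intro r hr
      refine hnsx (r / (2 * dh)) ?_
      have h2d : (2 * dh : RatFunc k) ≠ 0 := mul_ne_zero h2R hd0
      rw [div_pow, hr, hpn, hqn]
      field_simp
      ring
    have hn_ev : Polynomial.eval₂ (eps x hxtr) t (X ^ 2 + C pn * X + C qn) = 0 := by
      simp only [eval₂_add, eval₂_mul, eval₂_pow, eval₂_C, eval₂_X]
      rw [htgd, hpn, hqn]
      simp only [map_neg, map_mul, map_sub, map_pow, map_ofNat]
      linear_combination ((eps x hxtr dh) ^ 2) * hy2x
    have hEQ' : Polynomial.eval₂ (eps x hxtr) t ((swapp Q).map aM) = 0 := by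
      rw [Polynomial.eval₂_map, hepsξx]
      exact hevQ'
    rcases hgauss.isCoprime_or_dvd (X ^ 2 + C pn * X + C qn) with hcop | hdvd
    · obtain ⟨a', b', hab⟩ := hcop
      have h1 : Polynomial.eval₂ (eps x hxtr) t
          (a' * ((swapp Q).map aM) + b' * (X ^ 2 + C pn * X + C qn)) = 1 := by
        rw [hab, eval₂_one]
      rw [eval₂_add, eval₂_mul, eval₂_mul, hEQ', hn_ev, mul_zero, mul_zero, add_zero] at h1
      exact zero_ne_one h1
    · obtain ⟨W2, hW2⟩ := hdvd
      have hW2u : IsUnit W2 := by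
        rcases hn_irr.isUnit_or_isUnit hW2 with h | h
        · exact absurd h hgauss.not_isUnit
        · exact h
      have hassocn : Associated ((swapp Q).map aM) (X ^ 2 + C pn * X + C qn) :=
        ⟨hW2u.unit, by rw [hW2u.unit_spec, ← hW2]⟩
      have hQ'deg : (swapp Q).natDegree = 2 := by
        rw [← natDegree_map_eq_of_injective haMinj (swapp Q)]
        exact (natDegree_eq_of_assoc hassocn (quad_ne_zero _ _)).trans (quad_natDegree pn qn)
      have hcoeffbound : ∀ i, (Q.coeff i).natDegree ≤ 2 := by
        intro i
        rw [natDegree_le_iff_coeff_eq_zero]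
        intro N hN
        have h1 := coeff_swapp Q N i
        rw [← h1, coeff_eq_zero_of_natDegree_lt (by omega : (swapp Q).natDegree < N),
          coeff_zero]
      have hΔdeg : Δ.natDegree ≤ 4 := by
        rw [hΔ]
        have hb1 : ((Q.coeff 1) ^ 2).natDegree ≤ 4 := by
          rw [natDegree_pow]; have := hcoeffbound 1; omega
        have hb2 : ((4 : Polynomial k) * (Q.coeff 2 * Q.coeff 0)).natDegree ≤ 4 := by
          calc ((4 : Polynomial k) * (Q.coeff 2 * Q.coeff 0)).natDegree
              ≤ (4 : Polynomial k).natDegree + (Q.coeff 2 * Q.coeff 0).natDegree :=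
                natDegree_mul_le
            _ ≤ (4 : Polynomial k).natDegree
                + ((Q.coeff 2).natDegree + (Q.coeff 0).natDegree) := by
                have := natDegree_mul_le (p := Q.coeff 2) (q := Q.coeff 0); omega
            _ ≤ 4 := by
                rw [natDegree_ofNat]
                have := hcoeffbound 2; have := hcoeffbound 0; omega
        calc ((Q.coeff 1) ^ 2 - 4 * (Q.coeff 2 * Q.coeff 0)).natDegree
            ≤ max ((Q.coeff 1) ^ 2).natDegree
              ((4 * (Q.coeff 2 * Q.coeff 0) : Polynomial k)).natDegree :=
              natDegree_sub_le _ _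
          _ ≤ 4 := by omega
      have hA0' : Q.coeff 2 ≠ 0 := by
        intro h0; apply hA0; rw [h0, map_zero]
      have hb₁0 : bh.num ≠ 0 := RatFunc.num_ne_zero hb0
      have hh0 : (2 * Q.coeff 2 * bh.num : Polynomial k) ≠ 0 :=
        mul_ne_zero (mul_ne_zero h2kX hA0') hb₁0
      have hΔ0 : Δ ≠ 0 := by
        intro h0
        rw [h0, zero_mul] at hpoly
        exact (mul_ne_zero (pow_ne_zero 2 hh0) hDt0) hpoly.symm
      exact descent Dt hDtsf hDt5 bh.denom.natDegree bh.denom (2 * Q.coeff 2 * bh.num) Δ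
        le_rfl (RatFunc.denom_ne_zero bh) hh0 hΔ0 hΔdeg hpoly
end

section
/- Let k be a field of characteristic ≠ 2 and let F = k(t,u) = k(x,y) be a hyperelliptic function field, where u² = D_t(t) and y² = D_x(x) for monic separable polynomials D_t ∈ k[t] and D_x ∈ k[x]. Suppose x = (α₀t + α₁)/(α₂t + α₃) with α_i ∈ k, α₀α₃ − α₁α₂ ≠ 0, and y = φ·u with φ ∈ k(t)∖{0}. Set d_x := deg D_x and let η₁, …, η_{d_x} ∈ k̄ (the algebraic closure of k) be the roots of D_x. Define p_i := (α₀ − α₂η_i)·t + (α₁ − α₃η_i) ∈ k̄[t] for i = 1, …, d_x. Then the p_i are pairwise relatively prime polynomials of degree ≤ 1 in k̄[t], and D_t = φ^{−2}·(α₂t + α₃)^{−d_x}·∏_{i=1}^{d_x} p_i. -/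
open Polynomial

/-- The linear polynomial `p_i = (α₀ - α₂η)·X + (α₁ - α₃η)` over an extension of `k`. -/
noncomputable def pAux {k Ω : Type*} [Field k] [Field Ω] [Algebra k Ω]
    (α₀ α₁ α₂ α₃ : k) (ηi : Ω) : Polynomial Ω :=
  Polynomial.C (algebraMap k Ω α₀ - algebraMap k Ω α₂ * ηi) * Polynomial.X +
    Polynomial.C (algebraMap k Ω α₁ - algebraMap k Ω α₃ * ηi)

/-- In a hyperelliptic function field `k(t,u) = k(x,y)` with
`x = (α₀t+α₁)/(α₂t+α₃)`, `y = φu`, and `η₁, …, η_{d_x}` the roots of `D_x` in an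
algebraic closure, the polynomials `p_i = (α₀-α₂ηᵢ)t + (α₁-α₃ηᵢ)` are pairwise coprime
of degree `≤ 1` and `D_t = φ⁻²·(α₂t+α₃)^{-d_x}·∏ p_i` (an identity of rational
functions of `t`, stated in an extension `Ω` of `F` containing the roots). -/
theorem stmt14 (k F : Type*) [Field k] [Field F] [Algebra k F]
    (hchar : ringChar k ≠ 2)
    (g : ℕ) (hg : 1 < g)
    (t u x y : F) (Dt Dx : Polynomial k)
    (hDtm : Dt.Monic) (hDts : Dt.Separable)
    (hDtdeg : Dt.natDegree = 2 * g + 1 ∨ Dt.natDegree = 2 * g + 2)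
    (hDxm : Dx.Monic) (hDxs : Dx.Separable)
    (hDxdeg : Dx.natDegree = 2 * g + 1 ∨ Dx.natDegree = 2 * g + 2)
    (htr : Transcendental k t) (hxtr : Transcendental k x)
    (hu : u ^ 2 = Polynomial.aeval t Dt) (hy : y ^ 2 = Polynomial.aeval x Dx)
    (hFtu : IntermediateField.adjoin k {t, u} = ⊤)
    (hFxy : IntermediateField.adjoin k {x, y} = ⊤)
    (α₀ α₁ α₂ α₃ : k) (hdet : α₀ * α₃ - α₁ * α₂ ≠ 0)
    (hxeq : x = (algebraMap k F α₀ * t + algebraMap k F α₁) /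
      (algebraMap k F α₂ * t + algebraMap k F α₃))
    (φ : F) (hφmem : φ ∈ IntermediateField.adjoin k ({t} : Set F)) (hφ0 : φ ≠ 0)
    (hyφ : y = φ * u)
    (Ω : Type*) [Field Ω] [Algebra k Ω] [Algebra F Ω] [IsScalarTower k F Ω]
    (η : Fin Dx.natDegree → Ω)
    (hroots : Dx.map (algebraMap k Ω) = ∏ i, (X - C (η i))) :
    (∀ i, (pAux α₀ α₁ α₂ α₃ (η i)).degree ≤ 1) ∧
    (∀ i j, i ≠ j → IsCoprime (pAux α₀ α₁ α₂ α₃ (η i)) (pAux α₀ α₁ α₂ α₃ (η j))) ∧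
    Polynomial.aeval (algebraMap F Ω t) Dt =
      (algebraMap F Ω φ ^ 2)⁻¹ *
      ((algebraMap k Ω α₂ * algebraMap F Ω t + algebraMap k Ω α₃) ^ Dx.natDegree)⁻¹ *
      ∏ i, Polynomial.eval (algebraMap F Ω t) (pAux α₀ α₁ α₂ α₃ (η i)) := by
  classical
  -- notation
  set φΩ := algebraMap F Ω φ with hφΩ
  set T := algebraMap F Ω t with hT
  set xΩ := algebraMap F Ω x with hxΩ
  have hmapk : ∀ a : k, algebraMap F Ω (algebraMap k F a) = algebraMap k Ω a := fun a =>
    (IsScalarTower.algebraMap_apply k F Ω a).symm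
  set N := algebraMap k Ω α₀ * T + algebraMap k Ω α₁ with hN
  set L := algebraMap k Ω α₂ * T + algebraMap k Ω α₃ with hL
  -- injectivity of roots
  have hsep : (Dx.map (algebraMap k Ω)).Separable := hDxs.map
  rw [hroots] at hsep
  have hinj : Function.Injective η := separable_prod_X_sub_C_iff.mp hsep
  -- degree bound
  have hdeg : ∀ i, (pAux α₀ α₁ α₂ α₃ (η i)).degree ≤ 1 := fun i => degree_linear_le
  -- coprimality
  have hcop : ∀ i j, i ≠ j →
      IsCoprime (pAux α₀ α₁ α₂ α₃ (η i)) (pAux α₀ α₁ α₂ α₃ (η j)) := by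
    intro i j hij
    set ai := algebraMap k Ω α₀ - algebraMap k Ω α₂ * η i with hai
    set bi := algebraMap k Ω α₁ - algebraMap k Ω α₃ * η i with hbi
    set aj := algebraMap k Ω α₀ - algebraMap k Ω α₂ * η j with haj
    set bj := algebraMap k Ω α₁ - algebraMap k Ω α₃ * η j with hbj
    set δ := ai * bj - aj * bi with hδ
    have hδeq : δ = algebraMap k Ω (α₀ * α₃ - α₁ * α₂) * (η i - η j) := by
      rw [hδ, hai, hbi, haj, hbj, map_sub, map_mul, map_mul]; ring
    have hδ0 : δ ≠ 0 := by
      rw [hδeq]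
      exact mul_ne_zero ((map_ne_zero (algebraMap k Ω)).mpr hdet)
        (sub_ne_zero.mpr fun h => hij (hinj h))
    refine ⟨C (δ⁻¹ * (-aj)), C (δ⁻¹ * ai), ?_⟩
    have h1 : δ⁻¹ * (-aj) * ai + δ⁻¹ * ai * aj = 0 := by ring
    have h2 : δ⁻¹ * (-aj) * bi + δ⁻¹ * ai * bj = 1 := by
      field_simp [hδ]
      ring
    have : C (δ⁻¹ * (-aj)) * pAux α₀ α₁ α₂ α₃ (η i) +
        C (δ⁻¹ * ai) * pAux α₀ α₁ α₂ α₃ (η j)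
        = C (δ⁻¹ * (-aj) * ai + δ⁻¹ * ai * aj) * X +
          C (δ⁻¹ * (-aj) * bi + δ⁻¹ * ai * bj) := by
      simp only [pAux, ← hai, ← hbi, ← haj, ← hbj, C_add, C_mul]; ring
    rw [this, h1, h2]; simp
  refine ⟨hdeg, hcop, ?_⟩
  -- nonvanishing of the denominator
  have hLF : algebraMap k F α₂ * t + algebraMap k F α₃ ≠ 0 := by
    intro h
    by_cases hα₂ : α₂ = 0
    · subst hα₂
      simp only [map_zero, zero_mul, zero_add] at h
      have h3 : α₃ = 0 := by
        have := (algebraMap k F).injective (h.trans (map_zero _).symm)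
        simpa using this
      apply hdet
      rw [h3]; ring
    · have h2 : algebraMap k F α₂ ≠ 0 := fun hh =>
        hα₂ ((algebraMap k F).injective (by simpa using hh))
      have ht : t = algebraMap k F (-α₃ / α₂) := by
        rw [map_div₀, map_neg]
        field_simp
        linear_combination h
      exact htr (ht ▸ isAlgebraic_algebraMap _)
  have hL0 : L ≠ 0 := by
    have : L = algebraMap F Ω (algebraMap k F α₂ * t + algebraMap k F α₃) := by
      rw [map_add, map_mul, hmapk, hmapk, hL, hT]
    rw [this]
    exact (map_ne_zero (algebraMap F Ω)).mpr hLF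
  have hφΩ0 : φΩ ≠ 0 := (map_ne_zero (algebraMap F Ω)).mpr hφ0
  -- x in Ω
  have hxΩeq : xΩ = N / L := by
    rw [hxΩ, hxeq, map_div₀, map_add, map_mul, map_add, map_mul, hmapk, hmapk,
      hmapk, hmapk, hN, hL, hT]
  -- relation in F
  have hF : Polynomial.aeval t Dt = φ⁻¹ ^ 2 * Polynomial.aeval x Dx := by
    rw [← hu, ← hy, hyφ]
    field_simp
  -- transport to Ω
  have hmain : Polynomial.aeval T Dt = φΩ⁻¹ ^ 2 * Polynomial.aeval xΩ Dx := by
    have h5 : Polynomial.aeval T Dt = algebraMap F Ω (Polynomial.aeval t Dt) :=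
      Polynomial.aeval_algHom_apply (IsScalarTower.toAlgHom k F Ω) t Dt
    have h6 : Polynomial.aeval xΩ Dx = algebraMap F Ω (Polynomial.aeval x Dx) :=
      Polynomial.aeval_algHom_apply (IsScalarTower.toAlgHom k F Ω) x Dx
    rw [h5, hF, map_mul, map_pow, map_inv₀, h6]
  have hx2 : Polynomial.aeval xΩ Dx = ∏ i, (xΩ - η i) := by
    rw [Polynomial.aeval_def, ← Polynomial.eval_map, hroots, Polynomial.eval_prod]
    simp
  have hfac : ∀ i, xΩ - η i =
      Polynomial.eval T (pAux α₀ α₁ α₂ α₃ (η i)) * L⁻¹ := by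
    intro i
    have hev : Polynomial.eval T (pAux α₀ α₁ α₂ α₃ (η i)) = N - η i * L := by
      simp only [pAux, eval_add, eval_mul, eval_C, eval_X, hN, hL]; ring
    rw [hev, hxΩeq]
    field_simp
  rw [hmain, hx2]
  calc φΩ⁻¹ ^ 2 * ∏ i, (xΩ - η i)
      = φΩ⁻¹ ^ 2 * ∏ i, (Polynomial.eval T (pAux α₀ α₁ α₂ α₃ (η i)) * L⁻¹) := by
        rw [Finset.prod_congr rfl fun i _ => hfac i]
    _ = φΩ⁻¹ ^ 2 * ((∏ i, Polynomial.eval T (pAux α₀ α₁ α₂ α₃ (η i))) *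
          L⁻¹ ^ Dx.natDegree) := by
        rw [Finset.prod_mul_distrib, Finset.prod_const, Finset.card_fin]
    _ = (φΩ ^ 2)⁻¹ * (L ^ Dx.natDegree)⁻¹ *
          ∏ i, Polynomial.eval T (pAux α₀ α₁ α₂ α₃ (η i)) := by
        rw [inv_pow, inv_pow]; ring
end

section
/- Let k be a field of characteristic ≠ 2 and let F = k(t,u) = k(x,y) be a hyperelliptic function field, where u² = D_t(t) and y² = D_x(x) for monic separable polynomials D_t ∈ k[t] and D_x ∈ k[x]. Suppose x = (α₀t + α₁)/(α₂t + α₃) with α_i ∈ k, α₀α₃ − α₁α₂ ≠ 0, and y = φ·u with φ ∈ k(t)∖{0}. Then φ^{−1} is a nonzero polynomial: φ^{−1} ∈ k[t]∖{0}. -/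
open Polynomial

section Moeb

variable {k F : Type*} [Field k] [Field F] [Algebra k F]

/-- Homogenized Möbius substitution of degree `m`. -/
noncomputable def moeb (β₀ β₁ β₂ β₃ : k) (f : k[X]) (m : ℕ) : k[X] :=
  ∑ i ∈ Finset.range (m + 1),
    C (f.coeff i) * (C β₀ * X + C β₁) ^ i * (C β₂ * X + C β₃) ^ (m - i)

lemma moeb_natDegree_le (β₀ β₁ β₂ β₃ : k) (f : k[X]) (m : ℕ) :
    (moeb β₀ β₁ β₂ β₃ f m).natDegree ≤ m := by
  refine natDegree_sum_le_of_forall_le _ _ fun i hi => ?_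
  have hi' : i ≤ m := Nat.lt_succ_iff.mp (Finset.mem_range.mp hi)
  calc (C (f.coeff i) * (C β₀ * X + C β₁) ^ i * (C β₂ * X + C β₃) ^ (m - i)).natDegree
      ≤ (C (f.coeff i) * (C β₀ * X + C β₁) ^ i).natDegree
          + ((C β₂ * X + C β₃) ^ (m - i)).natDegree := natDegree_mul_le
    _ ≤ ((C (f.coeff i)).natDegree + ((C β₀ * X + C β₁) ^ i).natDegree)
          + ((C β₂ * X + C β₃) ^ (m - i)).natDegree := by
        exact Nat.add_le_add_right natDegree_mul_le _
    _ ≤ (0 + i * 1) + (m - i) * 1 := by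
        refine Nat.add_le_add (Nat.add_le_add ?_ ?_) ?_
        · simp
        · exact (natDegree_pow_le).trans (Nat.mul_le_mul_left _ natDegree_linear_le)
        · exact (natDegree_pow_le).trans (Nat.mul_le_mul_left _ natDegree_linear_le)
    _ ≤ m := by omega

lemma moeb_aeval (β₀ β₁ β₂ β₃ : k) (f : k[X]) (m : ℕ) (s z : F)
    (hm : f.natDegree ≤ m)
    (hz : z * (algebraMap k F β₂ * s + algebraMap k F β₃)
        = algebraMap k F β₀ * s + algebraMap k F β₁) :
    aeval s (moeb β₀ β₁ β₂ β₃ f m)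
      = (algebraMap k F β₂ * s + algebraMap k F β₃) ^ m * aeval z f := by
  set Ls : F := algebraMap k F β₂ * s + algebraMap k F β₃ with hLs
  rw [moeb, map_sum, Polynomial.aeval_eq_sum_range' (Nat.lt_succ_of_le hm) z, Finset.mul_sum]
  refine Finset.sum_congr rfl fun i hi => ?_
  have hi' : i ≤ m := Nat.lt_succ_iff.mp (Finset.mem_range.mp hi)
  simp only [map_mul, map_pow, map_add, aeval_C, aeval_X]
  rw [Algebra.smul_def]
  have h1 : Ls ^ m = Ls ^ (m - i) * Ls ^ i := by rw [← pow_add]; congr 1; omega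
  rw [h1, ← hz, mul_pow]
  ring

end Moeb


/-- In a hyperelliptic function field `k(t,u) = k(x,y)` with
`x = (α₀t+α₁)/(α₂t+α₃)` and `y = φu`, `φ ∈ k(t)∖{0}`, the inverse `φ⁻¹` is a nonzero
polynomial in `t`: `φ⁻¹ ∈ k[t]∖{0}`. -/
theorem stmt16 (k F : Type*) [Field k] [Field F] [Algebra k F]
    (hchar : ringChar k ≠ 2)
    (g : ℕ) (hg : 1 < g)
    (t u x y : F) (Dt Dx : Polynomial k)
    (hDtm : Dt.Monic) (hDts : Dt.Separable)
    (hDtdeg : Dt.natDegree = 2 * g + 1 ∨ Dt.natDegree = 2 * g + 2)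
    (hDxm : Dx.Monic) (hDxs : Dx.Separable)
    (hDxdeg : Dx.natDegree = 2 * g + 1 ∨ Dx.natDegree = 2 * g + 2)
    (htr : Transcendental k t) (hxtr : Transcendental k x)
    (hu : u ^ 2 = Polynomial.aeval t Dt) (hy : y ^ 2 = Polynomial.aeval x Dx)
    (hFtu : IntermediateField.adjoin k {t, u} = ⊤)
    (hFxy : IntermediateField.adjoin k {x, y} = ⊤)
    (α₀ α₁ α₂ α₃ : k) (hdet : α₀ * α₃ - α₁ * α₂ ≠ 0)
    (hxeq : x = (algebraMap k F α₀ * t + algebraMap k F α₁) /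
      (algebraMap k F α₂ * t + algebraMap k F α₃))
    (φ : F) (hφmem : φ ∈ IntermediateField.adjoin k ({t} : Set F)) (hφ0 : φ ≠ 0)
    (hyφ : y = φ * u) :
    φ⁻¹ ∈ Algebra.adjoin k ({t} : Set F) ∧ φ⁻¹ ≠ 0 := by
  classical
  have hinj_t : Function.Injective (aeval t : k[X] →ₐ[k] F) :=
    transcendental_iff_injective.mp htr
  have hinj_x : Function.Injective (aeval x : k[X] →ₐ[k] F) :=
    transcendental_iff_injective.mp hxtr
  have haeval_t_ne : ∀ p : k[X], p ≠ 0 → aeval t p ≠ 0 := fun p hp h =>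
    hp (hinj_t (by rw [h, map_zero]))
  have haeval_x_ne : ∀ p : k[X], p ≠ 0 → aeval x p ≠ 0 := fun p hp h =>
    hp (hinj_x (by rw [h, map_zero]))
  set n := Dx.natDegree with hn
  have hn1 : 1 ≤ n := by rcases hDxdeg with h | h <;> omega
  -- the linear polynomial L and its evaluation
  have hLt_eval : aeval t (C α₂ * X + C α₃ : k[X])
      = algebraMap k F α₂ * t + algebraMap k F α₃ := by
    simp only [map_add, map_mul, aeval_C, aeval_X]
  have hLt0 : algebraMap k F α₂ * t + algebraMap k F α₃ ≠ 0 := by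
    intro h
    have h1 : (C α₂ * X + C α₃ : k[X]) = 0 := hinj_t (by rw [hLt_eval, h, map_zero])
    have h2 : α₂ = 0 := by
      have := congrArg (fun p : k[X] => p.coeff 1) h1
      simpa using this
    have h3 : α₃ = 0 := by
      have := congrArg (fun p : k[X] => p.coeff 0) h1
      simpa using this
    exact hdet (by rw [h2, h3]; ring)
  have hx : x * (algebraMap k F α₂ * t + algebraMap k F α₃)
      = algebraMap k F α₀ * t + algebraMap k F α₁ := by
    rw [hxeq]; exact div_mul_cancel₀ _ hLt0
  -- the "inverse" linear evaluation
  have hLL : (algebraMap k F α₂ * t + algebraMap k F α₃)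
      * (algebraMap k F (-α₂) * x + algebraMap k F α₀)
      = algebraMap k F (α₀ * α₃ - α₁ * α₂) := by
    simp only [map_neg, map_sub, map_mul]
    linear_combination (-(algebraMap k F α₂)) * hx
  have hdetF : algebraMap k F (α₀ * α₃ - α₁ * α₂) ≠ 0 := by
    simpa using (map_ne_zero_iff _ (algebraMap k F).injective).mpr hdet
  have hL't0 : algebraMap k F (-α₂) * x + algebraMap k F α₀ ≠ 0 := by
    intro h
    exact hdetF (by rw [← hLL, h, mul_zero])
  have ht : t * (algebraMap k F (-α₂) * x + algebraMap k F α₀)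
      = algebraMap k F α₃ * x + algebraMap k F (-α₁) := by
    simp only [map_neg]
    linear_combination -hx
  -- write φ⁻¹ = At / Bt with A, B coprime
  obtain ⟨r, s, hrs⟩ := (IntermediateField.mem_adjoin_simple_iff k φ).mp hφmem
  have hsF : aeval t s ≠ 0 := by
    intro h; exact hφ0 (by rw [hrs, h, div_zero])
  have hrF : aeval t r ≠ 0 := by
    intro h; exact hφ0 (by rw [hrs, h, zero_div])
  have hs0 : s ≠ 0 := fun h => hsF (by rw [h, map_zero])
  have hr0 : r ≠ 0 := fun h => hrF (by rw [h, map_zero])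
  set G := GCDMonoid.gcd r s with hG
  have hG0 : G ≠ 0 := fun h => hs0 ((gcd_eq_zero_iff r s).mp h).2
  set B := r / G with hB
  set A := s / G with hA
  have hcop : IsCoprime B A := isCoprime_div_gcd_div_gcd hs0
  have hrB : G * B = r := EuclideanDomain.mul_div_cancel' hG0 (gcd_dvd_left r s)
  have hsA : G * A = s := EuclideanDomain.mul_div_cancel' hG0 (gcd_dvd_right r s)
  have hB0 : B ≠ 0 := fun h => hr0 (by rw [← hrB, h, mul_zero])
  have hA0 : A ≠ 0 := fun h => hs0 (by rw [← hsA, h, mul_zero])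
  have hGF : aeval t G ≠ 0 := haeval_t_ne G hG0
  have hAt : aeval t A ≠ 0 := haeval_t_ne A hA0
  have hBt : aeval t B ≠ 0 := haeval_t_ne B hB0
  have hφeq : φ = aeval t B / aeval t A := by
    rw [hrs, ← hrB, ← hsA, map_mul, map_mul, mul_div_mul_left _ _ hGF]
  have hφinv : φ⁻¹ = aeval t A / aeval t B := by rw [hφeq, inv_div]
  -- main equation
  have hkey : aeval x Dx = φ ^ 2 * aeval t Dt := by
    calc aeval x Dx = y ^ 2 := hy.symm
      _ = φ ^ 2 * u ^ 2 := by rw [hyφ]; ring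
      _ = φ ^ 2 * aeval t Dt := by rw [hu]
  set P := moeb α₀ α₁ α₂ α₃ Dx n with hP
  have hPt : aeval t P = (algebraMap k F α₂ * t + algebraMap k F α₃) ^ n * aeval x Dx :=
    moeb_aeval α₀ α₁ α₂ α₃ Dx n t x le_rfl hx
  have hDxx0 : aeval x Dx ≠ 0 := haeval_x_ne Dx hDxm.ne_zero
  have hP0 : P ≠ 0 := by
    intro h
    apply mul_ne_zero (pow_ne_zero n hLt0) hDxx0
    rw [← hPt, h, map_zero]
  have hmain : A ^ 2 * P = B ^ 2 * (Dt * (C α₂ * X + C α₃) ^ n) := by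
    apply hinj_t
    simp only [map_mul, map_pow, hPt, hLt_eval]
    rw [hkey, hφeq]
    field_simp
  have hBBP : B ^ 2 ∣ P :=
    (hcop.pow (m := 2) (n := 2)).dvd_of_dvd_mul_left ⟨_, hmain⟩
  obtain ⟨R, hR⟩ := hBBP
  have hR0 : R ≠ 0 := fun h => hP0 (by rw [hR, h, mul_zero])
  have hPdeg : P.natDegree ≤ n := moeb_natDegree_le _ _ _ _ _ _
  have hdegsum : 2 * B.natDegree + R.natDegree ≤ n := by
    have h1 := natDegree_mul (pow_ne_zero 2 hB0) hR0
    rw [natDegree_pow] at h1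
    have h2 : (B ^ 2 * R).natDegree ≤ n := hR ▸ hPdeg
    omega
  set mB := B.natDegree with hmB
  set mR := n - 2 * mB with hmR
  have hsum : 2 * mB + mR = n := by omega
  set b' := moeb α₃ (-α₁) (-α₂) α₀ B mB with hb'
  set r' := moeb α₃ (-α₁) (-α₂) α₀ R mR with hr'
  have hbx : aeval x b' = (algebraMap k F (-α₂) * x + algebraMap k F α₀) ^ mB * aeval t B :=
    moeb_aeval α₃ (-α₁) (-α₂) α₀ B mB x t le_rfl ht
  have hrx : aeval x r' = (algebraMap k F (-α₂) * x + algebraMap k F α₀) ^ mR * aeval t R :=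
    moeb_aeval α₃ (-α₁) (-α₂) α₀ R mR x t (by omega) ht
  obtain ⟨W, hW⟩ : ∃ w : F, w = algebraMap k F α₂ * t + algebraMap k F α₃ := ⟨_, rfl⟩
  obtain ⟨Z, hZ⟩ : ∃ z : F, z = algebraMap k F (-α₂) * x + algebraMap k F α₀ := ⟨_, rfl⟩
  rw [← hW] at hPt hLL hLt_eval
  rw [← hZ] at hLL hbx hrx
  have hPt2 : aeval t B ^ 2 * aeval t R = W ^ n * aeval x Dx := by
    rw [← hPt, hR, map_mul, map_pow]
  rw [← hsum] at hPt2
  have hkey2 : b' ^ 2 * r' = C ((α₀ * α₃ - α₁ * α₂) ^ n) * Dx := by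
    apply hinj_x
    simp only [map_mul, map_pow, hbx, hrx, aeval_C]
    rw [← hLL, ← hsum]
    linear_combination (Z ^ (2 * mB + mR)) * hPt2
  -- b' is a unit since Dx is squarefree
  have hb'dvd : b' * b' ∣ Dx := by
    obtain ⟨v, hv⟩ := (isUnit_C.mpr (hdet.isUnit.pow n)).exists_left_inv
    refine ⟨r' * v, ?_⟩
    calc Dx = 1 * Dx := (one_mul Dx).symm
      _ = v * (C ((α₀ * α₃ - α₁ * α₂) ^ n) * Dx) := by rw [← hv]; ring
      _ = v * (b' ^ 2 * r') := by rw [hkey2]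
      _ = b' * b' * (r' * v) := by ring
  have hb'unit : IsUnit b' := hDxs.squarefree b' hb'dvd
  obtain ⟨c, hcu, hc⟩ := Polynomial.isUnit_iff.mp hb'unit
  have hbc : algebraMap k F c = Z ^ mB * aeval t B := by
    rw [← hbx, ← hc, aeval_C]
  -- the polynomial identity  C (det^mB) * B = C c * L^mB
  have hBL : (C ((α₀ * α₃ - α₁ * α₂) ^ mB) : k[X]) * B = C c * (C α₂ * X + C α₃) ^ mB := by
    apply hinj_t
    simp only [map_mul, map_pow, aeval_C, hLt_eval]
    rw [← hLL, hbc, mul_pow]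
    ring
  -- conclude that B is a unit
  have hcopLN : IsCoprime (C α₂ * X + C α₃ : k[X]) (C α₀ * X + C α₁) := by
    have hC : C α₀ * (C α₂ * X + C α₃) - C α₂ * (C α₀ * X + C α₁)
        = (C (α₀ * α₃ - α₁ * α₂) : k[X]) := by
      simp only [map_sub, map_mul]; ring
    refine ⟨C ((α₀ * α₃ - α₁ * α₂)⁻¹) * C α₀, -(C ((α₀ * α₃ - α₁ * α₂)⁻¹) * C α₂), ?_⟩
    have h1 : C ((α₀ * α₃ - α₁ * α₂)⁻¹) * C α₀ * (C α₂ * X + C α₃)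
        + -(C ((α₀ * α₃ - α₁ * α₂)⁻¹) * C α₂) * (C α₀ * X + C α₁)
        = C ((α₀ * α₃ - α₁ * α₂)⁻¹)
            * (C α₀ * (C α₂ * X + C α₃) - C α₂ * (C α₀ * X + C α₁)) := by ring
    rw [h1, hC, ← C_mul, inv_mul_cancel₀ hdet, C_1]
  have hBunit : IsUnit B := by
    rcases Nat.eq_zero_or_pos mB with hmB0 | hmBpos
    · have h1 : B = C c := by
        have := hBL
        rw [hmB0, pow_zero, pow_zero, map_one, one_mul, mul_one] at this
        exact this
      rw [h1]; exact isUnit_C.mpr hcu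
    · by_cases hLunit : IsUnit (C α₂ * X + C α₃ : k[X])
      · have h1 : IsUnit (C c * (C α₂ * X + C α₃ : k[X]) ^ mB) :=
          (isUnit_C.mpr hcu).mul (hLunit.pow _)
        rw [← hBL] at h1
        exact isUnit_of_mul_isUnit_right h1
      · exfalso
        have hLB : (C α₂ * X + C α₃ : k[X]) ∣ B := by
          have h1 : (C α₂ * X + C α₃ : k[X]) ∣ C c * (C α₂ * X + C α₃) ^ mB :=
            Dvd.dvd.mul_left (dvd_pow_self _ hmBpos.ne') _
          rw [← hBL] at h1
          have h2 : B = C (((α₀ * α₃ - α₁ * α₂) ^ mB)⁻¹)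
              * (C ((α₀ * α₃ - α₁ * α₂) ^ mB) * B) := by
            rw [← mul_assoc, ← C_mul, inv_mul_cancel₀ (pow_ne_zero _ hdet), C_1, one_mul]
          rw [h2]
          exact Dvd.dvd.mul_left h1 _
        have hLP : (C α₂ * X + C α₃ : k[X]) ∣ P := by
          refine hLB.trans (dvd_trans ?_ ⟨R, hR⟩)
          exact dvd_pow_self B two_ne_zero
        have hsplit : P = (∑ i ∈ Finset.range n,
            C (Dx.coeff i) * (C α₀ * X + C α₁) ^ i * (C α₂ * X + C α₃) ^ (n - i))
            + (C α₀ * X + C α₁) ^ n := by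
          rw [hP, moeb, Finset.sum_range_succ, hDxm.coeff_natDegree, C_1, one_mul,
            Nat.sub_self, pow_zero, mul_one]
        have hdvdsum : (C α₂ * X + C α₃ : k[X]) ∣ ∑ i ∈ Finset.range n,
            C (Dx.coeff i) * (C α₀ * X + C α₁) ^ i * (C α₂ * X + C α₃) ^ (n - i) := by
          refine Finset.dvd_sum fun i hi => ?_
          have hi' : i < n := Finset.mem_range.mp hi
          exact Dvd.dvd.mul_left (dvd_pow_self _ (by omega : n - i ≠ 0)) _
        have hLN : (C α₂ * X + C α₃ : k[X]) ∣ (C α₀ * X + C α₁) ^ n := by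
          rw [hsplit] at hLP
          exact (dvd_add_right hdvdsum).mp hLP
        exact hLunit (hcopLN.pow_right.isUnit_of_dvd hLN)
  -- finish
  obtain ⟨e, heu, heC⟩ := Polynomial.isUnit_iff.mp hBunit
  have he0 : e ≠ 0 := heu.ne_zero
  have hφinv' : φ⁻¹ = aeval t (C e⁻¹ * A) := by
    rw [hφinv, ← heC, map_mul, aeval_C, aeval_C, map_inv₀, div_eq_mul_inv, mul_comm]
  constructor
  · rw [hφinv', Algebra.adjoin_singleton_eq_range_aeval]
    exact ⟨_, rfl⟩
  · exact inv_ne_zero hφ0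
end

section
/- Let k be a field of characteristic ≠ 2 and let F = k(t,u) = k(x,y) be a hyperelliptic function field, where u² = D_t(t) and y² = D_x(x) for monic separable polynomials D_t ∈ k[t] and D_x ∈ k[x]. Suppose x = (α₀t + α₁)/(α₂t + α₃) with α_i ∈ k, α₀α₃ − α₁α₂ ≠ 0, and y = φ·u with φ ∈ k(t)∖{0}. Then there exist γ ∈ k∖{0} and m ∈ ℕ such that φ^{−1} = γ·(α₂t + α₃)^m. -/
open Polynomial

section Aux

variable {K : Type*} [Field K]

/-- The "Möbius transform" of a polynomial `P`: the numerator of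
`P((a t + b)/(c t + d))` after clearing denominators. -/
noncomputable def mob (a b c d : K) (P : K[X]) : K[X] :=
  ∑ i ∈ Finset.range (P.natDegree + 1),
    C (P.coeff i) * (C a * X + C b) ^ i * (C c * X + C d) ^ (P.natDegree - i)

lemma mob_spec (a b c d : K) (P : K[X]) (hS : (C c * X + C d : K[X]) ≠ 0) :
    algebraMap K[X] (RatFunc K) (mob a b c d P) =
      aeval (algebraMap K[X] (RatFunc K) (C a * X + C b) /
          algebraMap K[X] (RatFunc K) (C c * X + C d)) P *
        algebraMap K[X] (RatFunc K) (C c * X + C d) ^ P.natDegree := by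
  set A := algebraMap K[X] (RatFunc K) (C a * X + C b) with hA
  set S := algebraMap K[X] (RatFunc K) (C c * X + C d) with hSdef
  have hS0 : S ≠ 0 := by
    rw [hSdef]
    exact fun h => hS (RatFunc.algebraMap_injective K (h.trans (map_zero _).symm))
  rw [Polynomial.aeval_eq_sum_range, Finset.sum_mul, mob, map_sum]
  refine Finset.sum_congr rfl fun i hi => ?_
  have hi' : i ≤ P.natDegree := Nat.lt_succ_iff.mp (Finset.mem_range.mp hi)
  have hpow : (A / S) ^ i * S ^ P.natDegree = A ^ i * S ^ (P.natDegree - i) := by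
    rw [div_pow, div_mul_eq_mul_div, eq_comm, eq_div_iff (pow_ne_zero _ hS0),
      mul_assoc, ← pow_add, Nat.sub_add_cancel hi']
  rw [smul_mul_assoc, hpow, Algebra.smul_def, map_mul, map_mul, map_pow, map_pow,
    RatFunc.algebraMap_C, RatFunc.algebraMap_eq_C, mul_assoc]

lemma mob_map {L : Type*} [Field L] (σ : K →+* L) (a b c d : K) (P : K[X]) :
    (mob a b c d P).map σ = mob (σ a) (σ b) (σ c) (σ d) (P.map σ) := by
  by_cases hP : P = 0
  · simp [hP, mob]
  have hdeg : (P.map σ).natDegree = P.natDegree := natDegree_map σ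
  rw [mob, Polynomial.map_sum, mob, hdeg]
  refine Finset.sum_congr rfl fun i hi => ?_
  simp [Polynomial.map_mul, Polynomial.map_pow, Polynomial.map_add, coeff_map]

lemma mob_eq_prod (a b c d : K) (hS : (C c * X + C d : K[X]) ≠ 0)
    (P : K[X]) (hm : P.Monic) (hsplit : P.Splits) :
    mob a b c d P =
      (P.roots.map (fun r => C (a - r * c) * X + C (b - r * d))).prod := by
  apply RatFunc.algebraMap_injective K
  rw [mob_spec a b c d P hS]
  set A := algebraMap K[X] (RatFunc K) (C a * X + C b) with hA
  set S := algebraMap K[X] (RatFunc K) (C c * X + C d) with hSdef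
  have hS0 : S ≠ 0 := RatFunc.algebraMap_ne_zero hS
  have hcard : Multiset.card P.roots = P.natDegree := by
    rw [hsplit.natDegree_eq_card_roots]
  have hPfac : P = (P.roots.map (fun r => X - C r)).prod :=
    hsplit.eq_prod_roots_of_monic hm
  have haeval : aeval (A / S) P =
      (P.roots.map (fun r => A / S - algebraMap K (RatFunc K) r)).prod := by
    conv_lhs => rw [hPfac]
    rw [map_multiset_prod, Multiset.map_map]
    refine congrArg Multiset.prod (Multiset.map_congr rfl fun r hr => ?_)
    simp [Function.comp]
  rw [haeval, map_multiset_prod, Multiset.map_map, ← hcard, ← Multiset.prod_replicate,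
    ← Multiset.map_const', ← Multiset.prod_map_mul]
  refine congrArg Multiset.prod (Multiset.map_congr rfl fun r hr => ?_)
  simp only [Function.comp_apply]
  have hfac : ((C (a - r * c) * X + C (b - r * d)) : K[X]) =
      (C a * X + C b) - C r * (C c * X + C d) := by
    simp only [C_sub, C_mul]; ring
  rw [hfac, map_sub, map_mul, ← hA, ← hSdef, RatFunc.algebraMap_C,
    ← RatFunc.algebraMap_eq_C, sub_mul, div_mul_cancel₀ _ hS0]

lemma isCoprime_mob_factor {a b c d : K} (hdet : a * d - b * c ≠ 0)
    {r r' : K} (hrr : r ≠ r') :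
    IsCoprime (C (a - r * c) * X + C (b - r * d))
      (C (a - r' * c) * X + C (b - r' * d)) := by
  set e : K := (r - r') * (c * b - a * d) with he
  have he0 : e ≠ 0 := by
    apply mul_ne_zero (sub_ne_zero.mpr hrr)
    intro h
    apply hdet
    linear_combination -h
  refine ⟨C ((a - r' * c) / e), C (-(a - r * c) / e), ?_⟩
  have h1 : ((a - r' * c) / e) * (a - r * c) + (-(a - r * c) / e) * (a - r' * c) = 0 := by
    field_simp
    ring
  have h2 : ((a - r' * c) / e) * (b - r * d) + (-(a - r * c) / e) * (b - r' * d) = 1 := by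
    field_simp
    ring
  have expand : C ((a - r' * c) / e) * (C (a - r * c) * X + C (b - r * d)) +
      C (-(a - r * c) / e) * (C (a - r' * c) * X + C (b - r' * d)) =
      C (((a - r' * c) / e) * (a - r * c) + (-(a - r * c) / e) * (a - r' * c)) * X +
      C (((a - r' * c) / e) * (b - r * d) + (-(a - r * c) / e) * (b - r' * d)) := by
    simp only [C_add, C_mul]; ring
  rw [expand, h1, h2]
  simp

lemma squarefree_mob_factor {a b c d : K} (hdet : a * d - b * c ≠ 0) (r : K) :
    Squarefree (C (a - r * c) * X + C (b - r * d)) := by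
  by_cases h : a - r * c = 0
  · have h2 : b - r * d ≠ 0 := by
      intro h2
      exact hdet (by linear_combination d * h - c * h2)
    rw [h]
    simpa using (isUnit_C.mpr h2.isUnit).squarefree
  · exact (irreducible_of_degree_eq_one (degree_linear h)).squarefree

lemma isCoprime_multiset_prod {x : K[X]} (s : Multiset K) (f : K → K[X])
    (h : ∀ b ∈ s, IsCoprime x (f b)) : IsCoprime x (s.map f).prod := by
  induction s using Multiset.induction with
  | empty => simpa using isCoprime_one_right
  | cons a s ih =>
    rw [Multiset.map_cons, Multiset.prod_cons]
    exact IsCoprime.mul_right (h a (Multiset.mem_cons_self a s))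
      (ih fun b hb => h b (Multiset.mem_cons_of_mem hb))

lemma squarefree_multiset_prod (s : Multiset K) (hs : s.Nodup) (f : K → K[X])
    (h1 : ∀ r, Squarefree (f r))
    (h2 : ∀ r r', r ≠ r' → IsCoprime (f r) (f r')) :
    Squarefree (s.map f).prod := by
  induction s using Multiset.induction with
  | empty => simpa using squarefree_one
  | cons a s ih =>
    rw [Multiset.map_cons, Multiset.prod_cons]
    obtain ⟨ha, hs'⟩ := Multiset.nodup_cons.mp hs
    rw [squarefree_mul_iff]
    refine ⟨?_, h1 a, ih hs'⟩
    exact (isCoprime_multiset_prod s f fun b hb =>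
      h2 a b (fun hab => ha (hab ▸ hb))).isRelPrime

lemma squarefree_of_map_squarefree {L : Type*} [Field L] (σ : K →+* L) {p : K[X]}
    (h : Squarefree (p.map σ)) : Squarefree p := by
  intro w hw
  have h2 : (w.map σ) * (w.map σ) ∣ p.map σ := by
    simpa [Polynomial.map_mul] using Polynomial.map_dvd σ hw
  have hu := h _ h2
  have hw0 : w ≠ 0 := by
    rintro rfl
    simp only [Polynomial.map_zero] at hu
    exact not_isUnit_zero hu
  rw [Polynomial.isUnit_iff_degree_eq_zero] at hu ⊢
  rwa [degree_map] at hu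

/-- The Möbius transform of a monic separable polynomial is squarefree. -/
lemma squarefree_mob {a b c d : K} (hdet : a * d - b * c ≠ 0)
    (P : K[X]) (hm : P.Monic) (hsep : P.Separable) :
    Squarefree (mob a b c d P) := by
  set L := AlgebraicClosure K
  set σ : K →+* L := algebraMap K L
  apply squarefree_of_map_squarefree σ
  rw [mob_map]
  have hdet' : σ a * σ d - σ b * σ c ≠ 0 := by
    rw [← map_mul, ← map_mul, ← map_sub]
    exact fun h => hdet (σ.injective (h.trans (map_zero σ).symm))
  have hS' : (C (σ c) * X + C (σ d) : L[X]) ≠ 0 := by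
    intro h
    apply hdet'
    have hc : σ c = 0 := by
      have := congrArg (fun q => coeff q 1) h
      simpa using this
    have hd : σ d = 0 := by
      have := congrArg (fun q => coeff q 0) h
      simpa [hc] using this
    rw [hc, hd]; ring
  rw [mob_eq_prod (σ a) (σ b) (σ c) (σ d) hS' (P.map σ) (hm.map σ)
    (IsAlgClosed.splits (P.map σ))]
  exact squarefree_multiset_prod _ (nodup_roots hsep.map) _
    (fun r => squarefree_mob_factor hdet' r)
    (fun r r' hrr => isCoprime_mob_factor hdet' hrr)

/-- Extract the largest power of `S` from `q`. -/
lemma exists_pow_mul_not_dvd (S : K[X]) (hS : 0 < S.natDegree) :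
    ∀ n (q : K[X]), q.natDegree = n → q ≠ 0 → ∃ m r, q = S ^ m * r ∧ ¬ S ∣ r := by
  intro n
  induction n using Nat.strong_induction_on with
  | _ n ih =>
    intro q hn hq
    by_cases h : S ∣ q
    · obtain ⟨q', rfl⟩ := h
      have hS0 : S ≠ 0 := fun h0 => by simp [h0] at hS
      have hq' : q' ≠ 0 := fun h0 => hq (by simp [h0])
      have hlt : q'.natDegree < n := by
        rw [← hn, natDegree_mul hS0 hq']
        omega
      obtain ⟨m, r, hqr, hr⟩ := ih _ hlt q' rfl hq'
      exact ⟨m + 1, r, by rw [hqr, pow_succ]; ring, hr⟩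
    · exact ⟨0, q, by simp, h⟩

lemma isCoprime_of_isUnit_right {R : Type*} [CommSemiring R] {x y : R}
    (h : IsUnit y) : IsCoprime x y := by
  obtain ⟨v, rfl⟩ := h
  exact ⟨0, ↑v⁻¹, by simp⟩

/-- Key lemma over the rational function field. -/
lemma key_ratfunc (a b c d : K) (hdet : a * d - b * c ≠ 0)
    (Dt Dx : K[X]) (hDts : Dt.Separable) (hDxm : Dx.Monic) (hDxs : Dx.Separable)
    (ψ : RatFunc K) (hψ : ψ ≠ 0)
    (heq : ψ ^ 2 * algebraMap K[X] (RatFunc K) Dt =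
      aeval (algebraMap K[X] (RatFunc K) (C a * X + C b) /
        algebraMap K[X] (RatFunc K) (C c * X + C d)) Dx) :
    ∃ γ : K, γ ≠ 0 ∧ ∃ m : ℕ,
      ψ⁻¹ = algebraMap K[X] (RatFunc K) (C γ * (C c * X + C d) ^ m) := by
  classical
  set S : K[X] := C c * X + C d with hSdef
  have hScd : ¬(c = 0 ∧ d = 0) := by
    rintro ⟨rfl, rfl⟩
    simp at hdet
  have hS : S ≠ 0 := by
    intro h
    apply hScd
    constructor
    · have := congrArg (fun q => coeff q 1) h
      simpa [hSdef] using this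
    · have := congrArg (fun q => coeff q 0) h
      simpa [hSdef] using this
  set E : K[X] := mob a b c d Dx with hEdef
  have hEsf : Squarefree E := squarefree_mob hdet Dx hDxm hDxs
  set n := Dx.natDegree with hn
  -- the polynomial equation
  set p : K[X] := ψ.num with hp
  set q : K[X] := ψ.denom with hq
  have hp0 : p ≠ 0 := RatFunc.num_ne_zero hψ
  have hq0 : q ≠ 0 := ψ.denom_ne_zero
  have hcop : IsCoprime p q := ψ.isCoprime_num_denom
  have hq0' : algebraMap K[X] (RatFunc K) q ≠ 0 := RatFunc.algebraMap_ne_zero hq0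
  have hS0' : algebraMap K[X] (RatFunc K) S ≠ 0 := RatFunc.algebraMap_ne_zero hS
  have hpoly : E * q ^ 2 = p ^ 2 * Dt * S ^ n := by
    apply RatFunc.algebraMap_injective K
    rw [map_mul, map_mul, map_mul, map_pow, map_pow, map_pow]
    rw [mob_spec a b c d Dx hS, ← heq]
    have hnum : ψ * algebraMap K[X] (RatFunc K) q = algebraMap K[X] (RatFunc K) p := by
      rw [← RatFunc.num_div_denom ψ, div_mul_cancel₀ _ hq0']
    rw [← hnum]
    ring
  -- p is a unit
  have hpu : IsUnit p := by
    by_contra hpu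
    obtain ⟨π, hπirr, hπdvd⟩ := WfDvdMonoid.exists_irreducible_factor hpu hp0
    have hππ : π * π ∣ E * q ^ 2 := by
      rw [hpoly]
      obtain ⟨w, hw⟩ := hπdvd
      exact ⟨w ^ 2 * Dt * S ^ n, by rw [hw]; ring⟩
    have hπq : IsCoprime π q := hcop.of_isCoprime_of_dvd_left hπdvd
    have hπE : π * π ∣ E :=
      ((hπq.mul_left hπq).pow_right (n := 2)).dvd_of_dvd_mul_right hππ
    exact hπirr.not_isUnit (hEsf π hπE)
  have hDtsf : Squarefree Dt := hDts.squarefree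
  -- q = S ^ m * r with r a unit
  have main : ∀ r : K[X], r ≠ 0 → r ∣ q →
      (∀ π : K[X], Irreducible π → π ∣ r → IsCoprime π S) → IsUnit r := by
    intro r hr0 hrq hScop
    by_contra hru
    obtain ⟨π, hπirr, hπdvd⟩ := WfDvdMonoid.exists_irreducible_factor hru hr0
    have hππq : π * π ∣ p ^ 2 * Dt * S ^ n := by
      rw [← hpoly]
      exact (mul_dvd_mul (hπdvd.trans hrq) (hπdvd.trans hrq)).trans ⟨E, by ring⟩
    have hπp : IsCoprime (π * π) (p ^ 2) := by
      have h1 : IsCoprime π (p ^ 2) := isCoprime_of_isUnit_right (hpu.pow 2)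
      exact h1.mul_left h1
    have hππ2 : π * π ∣ Dt * S ^ n := by
      refine hπp.dvd_of_dvd_mul_right ?_
      have : p ^ 2 * Dt * S ^ n = Dt * S ^ n * p ^ 2 := by ring
      rwa [this] at hππq
    have hπS : IsCoprime (π * π) (S ^ n) := by
      have h1 : IsCoprime π S := hScop π hπirr hπdvd
      exact ((h1.mul_left h1).pow_right)
    have hπDt : π * π ∣ Dt := hπS.dvd_of_dvd_mul_right hππ2
    exact hπirr.not_isUnit (hDtsf π hπDt)
  have hqSr : ∃ m r, q = S ^ m * r ∧ IsUnit r := by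
    by_cases hc : c = 0
    · have hd : d ≠ 0 := by
        intro hd
        rw [hc, hd] at hdet
        apply hdet
        ring
      have hSu : IsUnit S := by
        have : S = C d := by rw [hSdef, hc]; simp
        rw [this]
        exact isUnit_C.mpr hd.isUnit
      exact ⟨0, q, by simp, main q hq0 dvd_rfl
        (fun π _ _ => isCoprime_of_isUnit_right hSu)⟩
    · have hSdeg : S.natDegree = 1 := natDegree_linear hc
      have hSirr : Irreducible S := irreducible_of_degree_eq_one (degree_linear hc)
      obtain ⟨m, r, hqr, hSr⟩ :=
        exists_pow_mul_not_dvd S (by omega) q.natDegree q rfl hq0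
      have hr0 : r ≠ 0 := by
        rintro rfl
        exact hq0 (by rw [hqr, mul_zero])
      refine ⟨m, r, hqr, main r hr0 ⟨S ^ m, by rw [hqr]; ring⟩ ?_⟩
      intro π hπirr hπr
      rw [(hπirr.prime).coprime_iff_not_dvd]
      intro hπS
      exact hSr (((hπirr.associated_of_dvd hSirr hπS).symm.dvd).trans hπr)
  obtain ⟨m, r, hqeq, hru⟩ := hqSr
  obtain ⟨p₀, hp₀u, hp₀⟩ := Polynomial.isUnit_iff.mp hpu
  obtain ⟨r₀, hr₀u, hr₀⟩ := Polynomial.isUnit_iff.mp hru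
  have hp₀0 : p₀ ≠ 0 := hp₀u.ne_zero
  have hr₀0 : r₀ ≠ 0 := hr₀u.ne_zero
  refine ⟨r₀ * p₀⁻¹, mul_ne_zero hr₀0 (inv_ne_zero hp₀0), m, ?_⟩
  have hnum : ψ = algebraMap K[X] (RatFunc K) p / algebraMap K[X] (RatFunc K) q :=
    (RatFunc.num_div_denom ψ).symm
  rw [hnum, inv_div, div_eq_iff (RatFunc.algebraMap_ne_zero hp0), ← map_mul]
  apply congrArg
  rw [hqeq, ← hp₀, ← hr₀]
  have hC : r₀ * p₀⁻¹ * p₀ = r₀ := by field_simp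
  calc S ^ m * C r₀ = C (r₀ * p₀⁻¹ * p₀) * S ^ m := by rw [hC]; ring
    _ = C (r₀ * p₀⁻¹) * S ^ m * C p₀ := by rw [C_mul]; ring

end Aux

/-- In a hyperelliptic function field `k(t,u) = k(x,y)` with
`x = (α₀t+α₁)/(α₂t+α₃)` and `y = φu`, `φ ∈ k(t)∖{0}`, there are `γ ∈ k∖{0}` and
`m ∈ ℕ` with `φ⁻¹ = γ·(α₂t + α₃)^m`. -/
theorem stmt17 (k F : Type*) [Field k] [Field F] [Algebra k F]
    (hchar : ringChar k ≠ 2)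
    (g : ℕ) (hg : 1 < g)
    (t u x y : F) (Dt Dx : Polynomial k)
    (hDtm : Dt.Monic) (hDts : Dt.Separable)
    (hDtdeg : Dt.natDegree = 2 * g + 1 ∨ Dt.natDegree = 2 * g + 2)
    (hDxm : Dx.Monic) (hDxs : Dx.Separable)
    (hDxdeg : Dx.natDegree = 2 * g + 1 ∨ Dx.natDegree = 2 * g + 2)
    (htr : Transcendental k t) (hxtr : Transcendental k x)
    (hu : u ^ 2 = Polynomial.aeval t Dt) (hy : y ^ 2 = Polynomial.aeval x Dx)
    (hFtu : IntermediateField.adjoin k {t, u} = ⊤)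
    (hFxy : IntermediateField.adjoin k {x, y} = ⊤)
    (α₀ α₁ α₂ α₃ : k) (hdet : α₀ * α₃ - α₁ * α₂ ≠ 0)
    (hxeq : x = (algebraMap k F α₀ * t + algebraMap k F α₁) /
      (algebraMap k F α₂ * t + algebraMap k F α₃))
    (φ : F) (hφmem : φ ∈ IntermediateField.adjoin k ({t} : Set F)) (hφ0 : φ ≠ 0)
    (hyφ : y = φ * u) :
    ∃ γ : k, γ ≠ 0 ∧ ∃ m : ℕ,
      φ⁻¹ = algebraMap k F γ * (algebraMap k F α₂ * t + algebraMap k F α₃) ^ m := by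
  classical
  have hAinj : Function.Injective (Polynomial.aeval t : k[X] →ₐ[k] F) :=
    transcendental_iff_injective.mp htr
  set f : RatFunc k →ₐ[k] F := RatFunc.liftAlgHom (Polynomial.aeval t)
    (nonZeroDivisors_le_comap_nonZeroDivisors_of_injective _ hAinj) with hf
  have hfinj : Function.Injective f :=
    RatFunc.liftAlgHom_injective _ hAinj _
  have hfalg : ∀ p : k[X], f (algebraMap k[X] (RatFunc k) p) = Polynomial.aeval t p := by
    intro p
    have := RatFunc.liftAlgHom_apply_div' (Polynomial.aeval t)
      (nonZeroDivisors_le_comap_nonZeroDivisors_of_injective _ hAinj) p 1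
    simpa using this
  -- φ is in the range of f
  have hrange : IntermediateField.adjoin k ({t} : Set F) ≤ f.fieldRange := by
    rw [IntermediateField.adjoin_le_iff]
    intro z hz
    rw [Set.mem_singleton_iff] at hz
    rw [hz]
    exact ⟨algebraMap k[X] (RatFunc k) X, by show f _ = t; rw [hfalg]; simp⟩
  obtain ⟨ψ, hψφ'⟩ := hrange hφmem
  have hψφ : f ψ = φ := hψφ'
  have hψ0 : ψ ≠ 0 := by
    rintro rfl
    exact hφ0 (hψφ ▸ (map_zero f))
  -- the key equation
  have hSF : algebraMap k F α₂ * t + algebraMap k F α₃ ≠ 0 := by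
    intro h
    by_cases hc : α₂ = 0
    · rw [hc] at h
      simp only [map_zero, zero_mul, zero_add] at h
      have hd : α₃ = 0 := by
        have : Function.Injective (algebraMap k F) := (algebraMap k F).injective
        exact this (h.trans (map_zero _).symm)
      rw [hc, hd] at hdet
      simp at hdet
    · apply htr
      refine ⟨C α₂ * X + C α₃, ?_, by simpa using h⟩
      intro h0
      apply hc
      have := congrArg (fun q => coeff q 1) h0
      simpa using this
  have hxf : x = f (algebraMap k[X] (RatFunc k) (C α₀ * X + C α₁) /
      algebraMap k[X] (RatFunc k) (C α₂ * X + C α₃)) := by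
    rw [map_div₀, hfalg, hfalg, hxeq]
    simp [Polynomial.aeval_add, Polynomial.aeval_mul]
  have hkey : ψ ^ 2 * algebraMap k[X] (RatFunc k) Dt =
      aeval (algebraMap k[X] (RatFunc k) (C α₀ * X + C α₁) /
        algebraMap k[X] (RatFunc k) (C α₂ * X + C α₃)) Dx := by
    apply hfinj
    rw [map_mul, map_pow, hψφ, hfalg, ← Polynomial.aeval_algHom_apply, ← hxf]
    rw [← hu, ← hy, hyφ]
    ring
  obtain ⟨γ, hγ0, m, hm⟩ := key_ratfunc α₀ α₁ α₂ α₃ hdet Dt Dx hDts hDxm hDxs ψ hψ0 hkey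
  refine ⟨γ, hγ0, m, ?_⟩
  have : φ⁻¹ = f ψ⁻¹ := by rw [← hψφ, ← map_inv₀]
  rw [this, hm, hfalg]
  simp [Polynomial.aeval_add, Polynomial.aeval_mul, Algebra.smul_def]
end

section
/- Let k be a field of characteristic ≠ 2 and let F = k(t,u) = k(x,y) be a hyperelliptic function field, where u² = D_t(t) and y² = D_x(x) for monic separable polynomials D_t ∈ k[t] and D_x ∈ k[x]. Suppose x = (α₀t + α₁)/(α₂t + α₃) with α_i ∈ k, α₀α₃ − α₁α₂ ≠ 0, and y = φ·u with φ ∈ k(t)∖{0}. If x ∈ k[t], then φ ∈ k∖{0}. -/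
/-!
Since `t` is transcendental, a Möbius transform of `t` that lies in `k[t]` is an affine polynomial
`p(t)` of nonzero slope, so `E = D_x ∘ p` is again separable and `D_x(x) = E(t)`. Writing
`φ = P(t)/Q(t)`, the relation `y² = φ²u²` becomes `P² D_t = Q² E` in `k[t]`. After cancelling
`gcd(P, Q)`, the coprime parts have squares dividing the squarefree polynomials `E` and `D_t`
respectively, so both are units and `φ` is a constant.
-/

open Polynomial

theorem associated_of_sq_mul_eq_sq_mul {R : Type*} [CommMonoidWithZero R]
    [GCDMonoid R] {A B P Q : R} (hA : Squarefree A) (hB : Squarefree B) (hQ : Q ≠ 0)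
    (h : P ^ 2 * A = Q ^ 2 * B) : Associated Q P := by
  obtain ⟨P', Q', hP, hQ', hunit⟩ := extract_gcd P Q
  have hd : gcd P Q ≠ 0 := gcd_ne_zero_of_right hQ
  generalize gcd P Q = d at hP hQ' hd
  subst hP hQ'
  have hcop : IsRelPrime P' Q' := gcd_isUnit_iff_isRelPrime.mp hunit
  have h' : P' ^ 2 * A = Q' ^ 2 * B := by
    refine mul_left_cancel₀ (pow_ne_zero 2 hd) ?_
    simpa only [mul_pow, mul_assoc] using h
  have hP'u : IsUnit P' := hB P' (by rw [← sq]; exact hcop.pow.dvd_of_dvd_mul_left ⟨A, h'.symm⟩)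
  have hQ'u : IsUnit Q' := hA Q' (by rw [← sq]; exact hcop.symm.pow.dvd_of_dvd_mul_left ⟨B, h'⟩)
  exact ((associated_one_iff_isUnit.mpr hQ'u).trans
    (associated_one_iff_isUnit.mpr hP'u).symm).mul_left d

theorem Polynomial.Separable.comp_of_isUnit_derivative {R : Type*} [CommRing R] {f g : R[X]}
    (hf : f.Separable) (hg : IsUnit (derivative g)) : (f.comp g).Separable := by
  have hcomp : IsCoprime (f.comp g) ((derivative f).comp g) := IsCoprime.map hf (compRingHom g)
  rw [Separable, derivative_comp]
  exact (isCoprime_mul_unit_left_right hg _ _).mpr hcomp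

theorem Polynomial.isUnit_derivative_of_mul_linear_eq_linear {k : Type*} [Field k] {p : k[X]}
    {α β γ δ : k} (h : p * (C γ * X + C δ) = C α * X + C β) (hdet : α * δ - β * γ ≠ 0) :
    IsUnit (derivative p) := by
  have hγ : γ = 0 := by
    by_contra hγ
    have hp : p.natDegree = 0 := by
      rcases eq_or_ne p 0 with rfl | hp0
      · rfl
      have hlin : C γ * X + C δ ≠ 0 := fun h0 => by simpa [h0] using natDegree_linear hγ (b := δ)
      have hdeg := natDegree_mul hp0 hlin
      rw [h, natDegree_linear hγ] at hdeg
      have := natDegree_linear_le (a := α) (b := β)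
      omega
    obtain ⟨c, rfl⟩ : ∃ c, p = C c := ⟨_, eq_C_of_natDegree_eq_zero hp⟩
    have h1 := congrArg (coeff · 1) h
    have h0 := congrArg (coeff · 0) h
    simp only [coeff_C_mul, coeff_add, coeff_mul_X, coeff_C_zero, coeff_C_succ, add_zero,
      mul_coeff_zero, coeff_X_zero, mul_zero, zero_add] at h1 h0
    apply hdet; rw [← h1, ← h0]; ring
  subst hγ
  have hα : α ≠ 0 := by rintro rfl; simp at hdet
  have hder : derivative p * C δ = C α := by
    simpa using congrArg derivative h
  exact isUnit_of_mul_isUnit_left (hder ▸ isUnit_C.mpr hα.isUnit)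

theorem Transcendental.exists_aeval_eq_isUnit_derivative {k F : Type*} [Field k] [Field F]
    [Algebra k F] {t x : F} (ht : Transcendental k t) (hx : x ∈ Algebra.adjoin k {t})
    {α₀ α₁ α₂ α₃ : k} (hdet : α₀ * α₃ - α₁ * α₂ ≠ 0)
    (hxeq : x = (algebraMap k F α₀ * t + algebraMap k F α₁) /
      (algebraMap k F α₂ * t + algebraMap k F α₃)) :
    ∃ p : k[X], Polynomial.aeval t p = x ∧ IsUnit (derivative p) := by
  rw [Algebra.adjoin_singleton_eq_range_aeval] at hx
  obtain ⟨p, hpx⟩ := hx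
  replace hpx : Polynomial.aeval t p = x := hpx
  refine ⟨p, hpx, isUnit_derivative_of_mul_linear_eq_linear ?_ hdet⟩
  have hinj := transcendental_iff_injective.mp ht
  have hden : algebraMap k F α₂ * t + algebraMap k F α₃ ≠ 0 := by
    intro hzero
    have hlin : C α₂ * X + C α₃ = 0 := hinj (by simpa [Algebra.smul_def] using hzero)
    have h1 := congrArg (coeff · 1) hlin
    have h0 := congrArg (coeff · 0) hlin
    simp only [coeff_add, coeff_mul_X, coeff_C_zero, coeff_C_succ, add_zero, coeff_zero,
      mul_coeff_zero, coeff_X_zero, mul_zero, zero_add] at h1 h0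
    simp [h1, h0] at hdet
  apply hinj
  simp only [map_mul, map_add, aeval_C, aeval_X]
  rw [hpx, hxeq, div_mul_cancel₀ _ hden]

theorem stmt18_general (k F : Type*) [Field k] [Field F] [Algebra k F]
    (t u x y : F) (Dt Dx : Polynomial k)
    (hDts : Dt.Separable)
    (hDxs : Dx.Separable)
    (htr : Transcendental k t)
    (hu : u ^ 2 = Polynomial.aeval t Dt) (hy : y ^ 2 = Polynomial.aeval x Dx)
    (α₀ α₁ α₂ α₃ : k) (hdet : α₀ * α₃ - α₁ * α₂ ≠ 0)
    (hxeq : x = (algebraMap k F α₀ * t + algebraMap k F α₁) /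
      (algebraMap k F α₂ * t + algebraMap k F α₃))
    (φ : F) (hφmem : φ ∈ IntermediateField.adjoin k ({t} : Set F)) (hφ0 : φ ≠ 0)
    (hyφ : y = φ * u)
    (hxkt : x ∈ Algebra.adjoin k ({t} : Set F)) :
    ∃ c : k, c ≠ 0 ∧ φ = algebraMap k F c := by
  classical
  obtain ⟨p, rfl, hp⟩ := htr.exists_aeval_eq_isUnit_derivative hxkt hdet hxeq
  obtain ⟨P, Q, rfl⟩ := (IntermediateField.mem_adjoin_simple_iff k _).mp hφmem
  have hQt : aeval t Q ≠ 0 := fun h => hφ0 (by rw [h, div_zero])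
  have hQ : Q ≠ 0 := fun h => hQt (by rw [h, map_zero])
  have hrel : P ^ 2 * Dt = Q ^ 2 * Dx.comp p := by
    apply transcendental_iff_injective.mp htr
    simp only [map_mul, map_pow, aeval_comp, ← hy, hyφ, mul_pow, hu]
    field_simp
  obtain ⟨v, hv⟩ := associated_of_sq_mul_eq_sq_mul hDts.squarefree
    (hDxs.comp_of_isUnit_derivative hp).squarefree hQ hrel
  obtain ⟨c, hc, hcv⟩ := Polynomial.isUnit_iff.mp v.isUnit
  refine ⟨c, hc.ne_zero, ?_⟩
  rw [← hv, ← hcv, map_mul, aeval_C, mul_div_cancel_left₀ _ hQt]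

/-- In a hyperelliptic function field `k(t,u) = k(x,y)` with
`x = (α₀t+α₁)/(α₂t+α₃)` and `y = φu`, `φ ∈ k(t)∖{0}`: if `x ∈ k[t]` then
`φ ∈ k∖{0}`. -/
theorem stmt18 (k F : Type*) [Field k] [Field F] [Algebra k F]
    (hchar : ringChar k ≠ 2)
    (g : ℕ) (hg : 1 < g)
    (t u x y : F) (Dt Dx : Polynomial k)
    (hDtm : Dt.Monic) (hDts : Dt.Separable)
    (hDtdeg : Dt.natDegree = 2 * g + 1 ∨ Dt.natDegree = 2 * g + 2)
    (hDxm : Dx.Monic) (hDxs : Dx.Separable)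
    (hDxdeg : Dx.natDegree = 2 * g + 1 ∨ Dx.natDegree = 2 * g + 2)
    (htr : Transcendental k t) (hxtr : Transcendental k x)
    (hu : u ^ 2 = Polynomial.aeval t Dt) (hy : y ^ 2 = Polynomial.aeval x Dx)
    (hFtu : IntermediateField.adjoin k {t, u} = ⊤)
    (hFxy : IntermediateField.adjoin k {x, y} = ⊤)
    (α₀ α₁ α₂ α₃ : k) (hdet : α₀ * α₃ - α₁ * α₂ ≠ 0)
    (hxeq : x = (algebraMap k F α₀ * t + algebraMap k F α₁) /
      (algebraMap k F α₂ * t + algebraMap k F α₃))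
    (φ : F) (hφmem : φ ∈ IntermediateField.adjoin k ({t} : Set F)) (hφ0 : φ ≠ 0)
    (hyφ : y = φ * u)
    (hxkt : x ∈ Algebra.adjoin k ({t} : Set F)) :
    ∃ c : k, c ≠ 0 ∧ φ = algebraMap k F c :=
  stmt18_general k F t u x y Dt Dx hDts hDxs htr hu hy α₀ α₁ α₂ α₃ hdet hxeq φ hφmem hφ0 hyφ hxkt
end

section
/- Let k be a field of characteristic ≠ 2 and let F = k(t,u) = k(x,y) be a hyperelliptic function field of genus g, where u² = D_t(t) and y² = D_x(x) for monic separable polynomials D_t ∈ k[t] and D_x ∈ k[x]. Suppose x = (α₀t + α₁)/(α₂t + α₃) with α_i ∈ k, α₀α₃ − α₁α₂ ≠ 0, and y = φ·u with φ ∈ k(t)∖{0}. If x ∉ k[t] and the fraction is normalized so that α₂ = 1, then there exists γ ∈ k∖{0} such that φ^{−1} = γ·(t + α₃)^{g+1}. -/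
open Polynomial

/-- Core polynomial lemma: from the identity `P² · Dt · (X-s)ⁿ = N · Q²` with
`P, Q` coprime, `Dt` squarefree of degree `2g+1` or `2g+2`, `N(s) ≠ 0`,
`deg N ≤ n`, `n ∈ {2g+1, 2g+2}`, it follows that `P` is constant and
`Q = c·(X-s)^(g+1)`. -/
lemma stmt19_core {k : Type*} [Field k] (g : ℕ) (s : k) (Dt N P Q : k[X]) (n : ℕ)
    (hDt0 : Dt ≠ 0) (hDtsf : Squarefree Dt)
    (hm : Dt.natDegree = 2 * g + 1 ∨ Dt.natDegree = 2 * g + 2)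
    (hn : n = 2 * g + 1 ∨ n = 2 * g + 2)
    (hP0 : P ≠ 0) (hQ0 : Q ≠ 0) (hcop : IsCoprime P Q)
    (hNroot : ¬ N.IsRoot s) (hNdeg : N.natDegree ≤ n)
    (E : P ^ 2 * Dt * (X - C s) ^ n = N * Q ^ 2) :
    P.natDegree = 0 ∧ ∃ c : k, c ≠ 0 ∧ Q = C c * (X - C s) ^ (g + 1) := by
  set π : k[X] := X - C s with hπ
  have hπ0 : π ≠ 0 := X_sub_C_ne_zero s
  have hN0 : N ≠ 0 := by
    intro h
    apply mul_ne_zero (mul_ne_zero (pow_ne_zero 2 hP0) hDt0) (pow_ne_zero n hπ0)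
    rw [E, h, zero_mul]
  set a : ℕ := rootMultiplicity s Q with ha
  obtain ⟨R, hR⟩ := Q.pow_rootMultiplicity_dvd s
  rw [← hπ, ← ha] at hR
  have hR0 : R ≠ 0 := fun h => hQ0 (by rw [hR, h, mul_zero])
  have hπR : ¬ π ∣ R := by
    rintro ⟨S, hS⟩
    refine Q.pow_rootMultiplicity_not_dvd hQ0 s ⟨S, ?_⟩
    show Q = π ^ (a + 1) * S
    rw [hR, hS, pow_succ]
    ring
  have hRroot : ¬ R.IsRoot s := fun h => hπR (dvd_iff_isRoot.mpr h)
  set r : ℕ := rootMultiplicity s Dt with hr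
  have hr1 : r ≤ 1 := by
    by_contra h
    push_neg at h
    have hdvd : π * π ∣ Dt :=
      calc π * π = π ^ 2 := (sq π).symm
        _ ∣ π ^ r := pow_dvd_pow π h
        _ ∣ Dt := Dt.pow_rootMultiplicity_dvd s
    exact not_isUnit_X_sub_C s (hDtsf π hdvd)
  have hQne' : π ^ a * R ≠ 0 := by rw [← hR]; exact hQ0
  have hmulE : 2 * rootMultiplicity s P + r + n = 2 * a := by
    have h1 : rootMultiplicity s (P ^ 2 * Dt * π ^ n)
        = 2 * rootMultiplicity s P + r + n := by
      rw [rootMultiplicity_mul (mul_ne_zero (mul_ne_zero (pow_ne_zero 2 hP0) hDt0)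
        (pow_ne_zero n hπ0)), rootMultiplicity_mul (mul_ne_zero (pow_ne_zero 2 hP0) hDt0),
        sq P, rootMultiplicity_mul (mul_ne_zero hP0 hP0), hπ, rootMultiplicity_X_sub_C_pow]
      ring
    have h2 : rootMultiplicity s (N * Q ^ 2) = 2 * a := by
      rw [rootMultiplicity_mul (mul_ne_zero hN0 (pow_ne_zero 2 hQ0)),
        rootMultiplicity_eq_zero hNroot, sq Q, rootMultiplicity_mul (mul_ne_zero hQ0 hQ0)]
      ring
    rw [← h1, E, h2]
  have ha1 : 1 ≤ a := by omega
  have hπQ : π ∣ Q := by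
    rw [hR]
    exact Dvd.dvd.mul_right (dvd_pow_self π (by omega : a ≠ 0)) R
  have hPs : ¬ P.IsRoot s := by
    intro h
    exact not_isUnit_X_sub_C s (hcop.isUnit_of_dvd' (dvd_iff_isRoot.mpr h) hπQ)
  have hrmP : rootMultiplicity s P = 0 := rootMultiplicity_eq_zero hPs
  have h2a : 2 * a = r + n := by omega
  -- `R` is a unit
  have hQ2dvd : Q ^ 2 ∣ Dt * π ^ n := by
    have h1 : Q ^ 2 ∣ P ^ 2 * (Dt * π ^ n) := ⟨N, by linear_combination E⟩
    exact (hcop.symm.pow).dvd_of_dvd_mul_left h1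
  have hR2 : R ^ 2 ∣ Dt := by
    have h1 : R ^ 2 ∣ Q ^ 2 := ⟨π ^ (2 * a), by rw [hR]; ring⟩
    have h2 : IsCoprime (R ^ 2) (π ^ n) :=
      (((irreducible_X_sub_C s).coprime_iff_not_dvd.mpr hπR).symm.pow)
    exact h2.dvd_of_dvd_mul_right (h1.trans hQ2dvd)
  have hRunit : IsUnit R := hDtsf R (by rw [← sq]; exact hR2)
  obtain ⟨c, hcu, hcR⟩ := Polynomial.isUnit_iff.mp hRunit
  have hc0 : c ≠ 0 := hcu.ne_zero
  -- cancel πⁿ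
  have E2 : P ^ 2 * Dt = N * C c ^ 2 * π ^ r := by
    apply mul_right_cancel₀ (pow_ne_zero n hπ0)
    calc P ^ 2 * Dt * π ^ n = N * Q ^ 2 := E
      _ = N * C c ^ 2 * π ^ (2 * a) := by rw [hR, ← hcR]; ring
      _ = N * C c ^ 2 * π ^ r * π ^ n := by rw [h2a, pow_add]; ring
  -- degree count
  have hdeg : 2 * P.natDegree + Dt.natDegree = N.natDegree + r := by
    have hL : (P ^ 2 * Dt).natDegree = 2 * P.natDegree + Dt.natDegree := by
      rw [natDegree_mul (pow_ne_zero 2 hP0) hDt0, natDegree_pow]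
    have hRdeg : (N * C c ^ 2 * π ^ r).natDegree = N.natDegree + r := by
      rw [natDegree_mul (mul_ne_zero hN0 (pow_ne_zero 2 (C_ne_zero.mpr hc0)))
        (pow_ne_zero r hπ0), natDegree_mul hN0 (pow_ne_zero 2 (C_ne_zero.mpr hc0)),
        natDegree_pow, natDegree_pow, natDegree_C, hπ, natDegree_X_sub_C]
      ring
    rw [← hL, E2, hRdeg]
  have hdP : P.natDegree = 0 := by omega
  have haval : a = g + 1 := by omega
  exact ⟨hdP, c, hc0, by rw [hR, ← hcR, haval]; ring⟩

/-- In a hyperelliptic function field `k(t,u) = k(x,y)` of genus `g`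
with `x = (α₀t+α₁)/(α₂t+α₃)` and `y = φu`, `φ ∈ k(t)∖{0}`: if `x ∉ k[t]` and the
fraction is normalized so that `α₂ = 1`, then `φ⁻¹ = γ·(t + α₃)^(g+1)` for some
`γ ∈ k∖{0}`. -/
theorem stmt19 (k F : Type*) [Field k] [Field F] [Algebra k F]
    (hchar : ringChar k ≠ 2)
    (g : ℕ) (hg : 1 < g)
    (t u x y : F) (Dt Dx : Polynomial k)
    (hDtm : Dt.Monic) (hDts : Dt.Separable)
    (hDtdeg : Dt.natDegree = 2 * g + 1 ∨ Dt.natDegree = 2 * g + 2)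
    (hDxm : Dx.Monic) (hDxs : Dx.Separable)
    (hDxdeg : Dx.natDegree = 2 * g + 1 ∨ Dx.natDegree = 2 * g + 2)
    (htr : Transcendental k t) (hxtr : Transcendental k x)
    (hu : u ^ 2 = Polynomial.aeval t Dt) (hy : y ^ 2 = Polynomial.aeval x Dx)
    (hFtu : IntermediateField.adjoin k {t, u} = ⊤)
    (hFxy : IntermediateField.adjoin k {x, y} = ⊤)
    (α₀ α₁ α₂ α₃ : k) (hdet : α₀ * α₃ - α₁ * α₂ ≠ 0)
    (hxeq : x = (algebraMap k F α₀ * t + algebraMap k F α₁) /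
      (algebraMap k F α₂ * t + algebraMap k F α₃))
    (φ : F) (hφmem : φ ∈ IntermediateField.adjoin k ({t} : Set F)) (hφ0 : φ ≠ 0)
    (hyφ : y = φ * u)
    (hxkt : x ∉ Algebra.adjoin k ({t} : Set F)) (hα₂ : α₂ = 1) :
    ∃ γ : k, γ ≠ 0 ∧ φ⁻¹ = algebraMap k F γ * (t + algebraMap k F α₃) ^ (g + 1) := by
  classical
  subst hα₂
  have haev : ∀ p : k[X], aeval t p = 0 → p = 0 := transcendental_iff.mp htr
  have hinj : ∀ p q : k[X], aeval t p = aeval t q → p = q := by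
    intro p q h
    have h2 := haev (p - q) (by rw [map_sub, h, sub_self])
    exact sub_eq_zero.mp h2
  have hden : t + algebraMap k F α₃ ≠ 0 := by
    intro h
    have h1 : aeval t (X + C α₃) = 0 := by simpa using h
    exact X_add_C_ne_zero α₃ (haev _ h1)
  have hx' : x * (t + algebraMap k F α₃) = algebraMap k F α₀ * t + algebraMap k F α₁ := by
    rw [hxeq, map_one, one_mul]
    exact div_mul_cancel₀ _ hden
  set n := Dx.natDegree with hndef
  set N : k[X] := ∑ i ∈ Finset.range (n + 1),
    C (Dx.coeff i) * (C α₀ * X + C α₁) ^ i * (X + C α₃) ^ (n - i) with hN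
  have key1 : aeval t N = aeval x Dx * (t + algebraMap k F α₃) ^ n := by
    rw [hN, map_sum, aeval_eq_sum_range (p := Dx) x, Finset.sum_mul]
    apply Finset.sum_congr rfl
    intro i hi
    have hi' : i ≤ n := Nat.lt_succ_iff.mp (Finset.mem_range.mp hi)
    have hpow : (t + algebraMap k F α₃) ^ i * (t + algebraMap k F α₃) ^ (n - i)
        = (t + algebraMap k F α₃) ^ n := by
      rw [← pow_add, Nat.add_sub_cancel' hi']
    simp only [map_mul, map_pow, map_add, aeval_C, aeval_X, Algebra.smul_def, ← hx']
    rw [mul_pow, ← hpow]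
    ring
  have hφsq : φ ^ 2 * aeval t Dt = aeval x Dx := by
    rw [← hu, ← hy, hyφ, mul_pow]
  obtain ⟨P', Q', hφPQ⟩ := (IntermediateField.mem_adjoin_simple_iff k φ).mp hφmem
  have hQ'0 : aeval t Q' ≠ 0 := by
    intro h; exact hφ0 (by rw [hφPQ, h, div_zero])
  have hP'0 : aeval t P' ≠ 0 := by
    intro h; exact hφ0 (by rw [hφPQ, h, zero_div])
  have hP'ne : P' ≠ 0 := fun h => hP'0 (by rw [h, map_zero])
  have hQ'ne : Q' ≠ 0 := fun h => hQ'0 (by rw [h, map_zero])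
  set d := GCDMonoid.gcd P' Q' with hd
  have hd0 : d ≠ 0 := gcd_ne_zero_of_left hP'ne
  set P := P' / d with hPdef
  set Q := Q' / d with hQdef
  have hcop : IsCoprime P Q := isCoprime_div_gcd_div_gcd hQ'ne
  have hP0 : P ≠ 0 := left_div_gcd_ne_zero hP'ne
  have hQ0 : Q ≠ 0 := right_div_gcd_ne_zero hQ'ne
  have hPd : d * P = P' := EuclideanDomain.mul_div_cancel' hd0 (gcd_dvd_left P' Q')
  have hQd : d * Q = Q' := EuclideanDomain.mul_div_cancel' hd0 (gcd_dvd_right P' Q')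
  have haevd : aeval t d ≠ 0 := fun h => hd0 (haev d h)
  have haevQ : aeval t Q ≠ 0 := fun h => hQ0 (haev Q h)
  have haevP : aeval t P ≠ 0 := fun h => hP0 (haev P h)
  have hφPQ2 : φ = aeval t P / aeval t Q := by
    rw [hφPQ, ← hPd, ← hQd, map_mul, map_mul, mul_div_mul_left _ _ haevd]
  have hpq : aeval t P = φ * aeval t Q := by
    rw [hφPQ2, div_mul_cancel₀ _ haevQ]
  have E_F : aeval t (P ^ 2 * Dt * (X + C α₃) ^ n) = aeval t (N * Q ^ 2) := by
    simp only [map_mul, map_pow, map_add, aeval_X, aeval_C]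
    rw [key1, hpq, ← hφsq]
    ring
  have E : P ^ 2 * Dt * (X + C α₃) ^ n = N * Q ^ 2 := hinj _ _ E_F
  have hXC : (X : k[X]) + C α₃ = X - C (-α₃) := by rw [map_neg, sub_neg_eq_add]
  have hβ : α₁ - α₀ * α₃ ≠ 0 := by
    intro h
    exact hdet (by rw [mul_one]; linear_combination -h)
  have hNeval : N.eval (-α₃) = (α₁ - α₀ * α₃) ^ n := by
    rw [hN, eval_finset_sum]
    rw [Finset.sum_eq_single_of_mem n (Finset.self_mem_range_succ n)]
    · simp [hDxm.coeff_natDegree]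
      ring_nf
      rw [hndef, hDxm.coeff_natDegree, one_mul]
    · intro i hi hne
      have hlt : i < n := by
        have := Finset.mem_range.mp hi; omega
      simp [zero_pow (Nat.sub_ne_zero_of_lt hlt)]
  have hNroot : ¬ N.IsRoot (-α₃) := by
    intro h
    rw [IsRoot, hNeval] at h
    exact pow_ne_zero n hβ h
  have hNdeg : N.natDegree ≤ n := by
    rw [hN]
    apply natDegree_sum_le_of_forall_le
    intro i hi
    have hi' : i ≤ n := Nat.lt_succ_iff.mp (Finset.mem_range.mp hi)
    calc (C (Dx.coeff i) * (C α₀ * X + C α₁) ^ i * (X + C α₃) ^ (n - i)).natDegree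
        ≤ (C (Dx.coeff i) * (C α₀ * X + C α₁) ^ i).natDegree
            + ((X + C α₃) ^ (n - i)).natDegree := natDegree_mul_le
      _ ≤ ((C (Dx.coeff i)).natDegree + ((C α₀ * X + C α₁) ^ i).natDegree)
            + ((X + C α₃) ^ (n - i)).natDegree := by
          exact Nat.add_le_add_right natDegree_mul_le _
      _ ≤ (0 + i * 1) + (n - i) * 1 := by
          apply Nat.add_le_add
          apply Nat.add_le_add
          · simp [natDegree_C]
          · exact natDegree_pow_le.trans (Nat.mul_le_mul_left i natDegree_linear_le)
          · exact natDegree_pow_le.trans (by rw [natDegree_X_add_C])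
      _ ≤ n := by omega
  rw [hXC] at E
  obtain ⟨hdP, c, hc0, hQeq⟩ := stmt19_core g (-α₃) Dt N P Q n
    hDtm.ne_zero hDts.squarefree hDtdeg hDxdeg hP0 hQ0 hcop hNroot hNdeg E
  obtain ⟨p₀, hp₀⟩ := natDegree_eq_zero.mp hdP
  have hp₀0 : p₀ ≠ 0 := fun h => hP0 (by rw [← hp₀, h, map_zero])
  refine ⟨c / p₀, div_ne_zero hc0 hp₀0, ?_⟩
  have haevQeq : aeval t Q = algebraMap k F c * (t + algebraMap k F α₃) ^ (g + 1) := by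
    rw [hQeq]
    simp [map_mul, map_pow, map_sub, aeval_X, aeval_C, sub_neg_eq_add]
  have haevPeq : aeval t P = algebraMap k F p₀ := by rw [← hp₀, aeval_C]
  rw [hφPQ2, inv_div, haevQeq, haevPeq, map_div₀]
  field_simp
end
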